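/- arXiv:2411.04636 — 7 statements merged into one kernel-verified Lean document; each statement's English description precedes it below -/
import Mathlib

section
/- Let (i_1,…,i_N) be any reduced expression for w_0, let z_1,…,z_N ∈ K^×, and set A := x_{−i_1}(z_1)·x_{−i_2}(z_2)⋯x_{−i_N}(z_N). Then there exist a lower unitriangular matrix L and an upper unitriangular matrix U with (w̄_0·A^T)^{−1} = L·U; equivalently, every leading principal minor of (w̄_0·A^T)^{−1} equals 1. -/
open Matrix

noncomputable section

variable {K : Type*} [Field K]

/-- `x_i(z)`: identity except entry `z` in (1-based) position `(i, i+1)`. -/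
def xMat (n i : ℕ) (z : K) : Matrix (Fin n) (Fin n) K :=
  Matrix.of fun a b => if (a : ℕ) = (b : ℕ) then 1
    else if (a : ℕ) + 1 = i ∧ (b : ℕ) = i then z else 0

/-- `y_i(z)`: identity except entry `z` in (1-based) position `(i+1, i)`. -/
def yMat (n i : ℕ) (z : K) : Matrix (Fin n) (Fin n) K :=
  Matrix.of fun a b => if (a : ℕ) = (b : ℕ) then 1
    else if (a : ℕ) = i ∧ (b : ℕ) + 1 = i then z else 0

/-- `x_{-i}(z)`: identity except the 2×2 submatrix in (1-based) rows/columns `i, i+1`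
is `((z⁻¹, 0), (1, z))`. -/
def xnegMat (n i : ℕ) (z : K) : Matrix (Fin n) (Fin n) K :=
  Matrix.of fun a b =>
    if (a : ℕ) + 1 = i ∧ (b : ℕ) + 1 = i then z⁻¹
    else if (a : ℕ) = i ∧ (b : ℕ) = i then z
    else if (a : ℕ) = i ∧ (b : ℕ) + 1 = i then 1
    else if (a : ℕ) = (b : ℕ) then 1
    else 0

/-- `s̄_i := x_i(-1) · y_i(1) · x_i(-1)`. -/
def sbar (n i : ℕ) : Matrix (Fin n) (Fin n) K :=
  xMat n i (-1) * yMat n i 1 * xMat n i (-1)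

/-- The reduced expression `i₀ = (1,2,…,n-1, 1,2,…,n-2, …, 1,2, 1)` for `w₀`. -/
def i0List (n : ℕ) : List ℕ :=
  ((List.range (n - 1)).map fun j => List.range' 1 (n - 1 - j)).foldr (· ++ ·) []

/-- The reduced expression `i₀' = (n-1,…,1, n-1,…,2, …, n-1,n-2, n-1)` for `w₀`. -/
def i0'List (n : ℕ) : List ℕ :=
  ((List.range (n - 1)).map fun j => (List.range' (1 + j) (n - 1 - j)).reverse).foldr (· ++ ·) []

/-- The matrix `w̄₀ = s̄_{i_1} ⋯ s̄_{i_N}` (computed along `i₀`; it is independent of the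
choice of reduced expression). -/
def w0Mat (n : ℕ) : Matrix (Fin n) (Fin n) K :=
  ((i0List n).map fun i => sbar n i).prod

/-- `x_{-i_1}(z_1) ⋯ x_{-i_N}(z_N)` along the word `l` (with 1-based coordinates `z`). -/
def xnegProd (n : ℕ) (l : List ℕ) (z : ℕ → K) : Matrix (Fin n) (Fin n) K :=
  ((List.range l.length).map fun r => xnegMat n (l.getD r 0) (z (r + 1))).prod

/-- `x_{i_1}(p_1) ⋯ x_{i_N}(p_N)` along the word `l`. -/
def xProd (n : ℕ) (l : List ℕ) (p : ℕ → K) : Matrix (Fin n) (Fin n) K :=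
  ((List.range l.length).map fun r => xMat n (l.getD r 0) (p (r + 1))).prod

/-- `y_{i_1}(q_1) ⋯ y_{i_N}(q_N)` along the word `l`. -/
def yProd (n : ℕ) (l : List ℕ) (q : ℕ → K) : Matrix (Fin n) (Fin n) K :=
  ((List.range l.length).map fun r => yMat n (l.getD r 0) (q (r + 1))).prod

/-- The adjacent transposition `σ_i` (swapping `i` and `i+1`), as a function on `ℕ`. -/
def sigmaFun (i : ℕ) : ℕ → ℕ := fun k => if k = i then i + 1 else if k = i + 1 then i else k

/-- `σ_{i_1} ∘ σ_{i_2} ∘ ⋯ ∘ σ_{i_N}` (rightmost factor applied first). -/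
def wordPerm (l : List ℕ) : ℕ → ℕ := l.foldr (fun i f => sigmaFun i ∘ f) id

/-- A reduced expression for the longest element `w₀` of `Sₙ`. -/
def IsReducedWord (n : ℕ) (l : List ℕ) : Prop :=
  l.length = n * (n - 1) / 2 ∧ (∀ i ∈ l, 1 ≤ i ∧ i ≤ n - 1) ∧
    ∀ k, 1 ≤ k → k ≤ n → wordPerm l k = n + 1 - k

/-- Lower unitriangular. -/
def IsLowerUni {n : ℕ} (M : Matrix (Fin n) (Fin n) K) : Prop :=
  (∀ i, M i i = 1) ∧ ∀ i j : Fin n, i < j → M i j = 0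

/-- Upper unitriangular. -/
def IsUpperUni {n : ℕ} (M : Matrix (Fin n) (Fin n) K) : Prop :=
  (∀ i, M i i = 1) ∧ ∀ i j : Fin n, j < i → M i j = 0

/-- `s_k := Σ_{j=1}^{k-1} (n - j)`. -/
def sIdx (n k : ℕ) : ℕ := ∑ j ∈ Finset.range (k - 1), (n - (j + 1))

/-! Since `x_{-i}(z) = x_i(z⁻¹) s̄_i x_i(z)`, induction along the word gives `A = U₁ P U₂` with
`U₁, U₂` upper unitriangular and `P` a signed permutation matrix of `w₀`. In the inductive step
`x_{-i}(z)` meets `U P' V`, where `P'` is the signed permutation matrix of some `v` with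
`v⁻¹(i) < v⁻¹(i+1)`: this is where reducedness enters, through the inversion count. Writing
`x_i(z) U = U₀ x_i(c)` with `(U₀)_{i,i+1} = 0`, the transvection `x_i(c)` moves through `P'` as
another upper transvection, and `s̄_i U₀ s̄_i⁻¹` is still upper unitriangular. The signs of `P`
are counted by inversions, so they depend only on `w₀` and `P = w̄₀`. Finally
`w̄₀ Aᵀ = (w̄₀ U₂ᵀ w̄₀ᵀ) U₁ᵀ` is an upper unitriangular matrix times a lower one; invert. -/

section Elementary

-- The paper's 1-based index `i` of `x_i`, `s̄_i` is `q = p + 1`, where `p, q` are the 0-based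
-- rows `i, i + 1`.
variable {n : ℕ} {p q : Fin n}

lemma xMat_eq_transvection (hpq : (p : ℕ) + 1 = q) (c : K) :
    xMat n q c = transvection p q c := by
  ext a b
  simp only [xMat, transvection, of_apply, Matrix.add_apply, one_apply, single, Fin.ext_iff]
  split_ifs <;> first | (exfalso; omega) | simp

lemma yMat_eq_transvection (hpq : (p : ℕ) + 1 = q) (c : K) :
    yMat n q c = transvection q p c := by
  ext a b
  simp only [yMat, transvection, of_apply, Matrix.add_apply, one_apply, single, Fin.ext_iff]
  split_ifs <;> first | (exfalso; omega) | simp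

lemma xnegMat_eq (hpq : (p : ℕ) + 1 = q) (z : K) :
    xnegMat n q z = 1 + single p p (z⁻¹ - 1) + single q q (z - 1) + single q p 1 := by
  ext a b
  simp only [xnegMat, of_apply, Matrix.add_apply, one_apply, single, Fin.ext_iff]
  split_ifs <;> first | (exfalso; omega) | ring

lemma sbar_eq (hpq : (p : ℕ) + 1 = q) :
    (sbar n q : Matrix (Fin n) (Fin n) K) =
      1 + single q p 1 - single p q 1 - single p p 1 - single q q 1 := by
  have hqp : q ≠ p := by rw [Ne, Fin.ext_iff]; omega
  rw [sbar, xMat_eq_transvection hpq, yMat_eq_transvection hpq]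
  simp only [transvection, add_mul, mul_add, mul_one, one_mul, single_mul_single_same,
    single_mul_single_of_ne _ _ _ _ hqp, add_zero]
  rw [neg_one_mul, neg_neg]
  simp only [← single_neg]
  abel

lemma xnegMat_eq_mul (hpq : (p : ℕ) + 1 = q) {z : K} (hz : z ≠ 0) :
    xnegMat n q z = xMat n q z⁻¹ * sbar n q * xMat n q z := by
  have hqp : q ≠ p := by rw [Ne, Fin.ext_iff]; omega
  rw [xnegMat_eq hpq, xMat_eq_transvection hpq, xMat_eq_transvection hpq, sbar_eq hpq]
  simp only [transvection, add_mul, mul_add, sub_mul, mul_sub, mul_one, one_mul,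
    single_mul_single_same, single_mul_single_of_ne _ _ _ _ hqp, add_zero]
  ext a b
  simp only [Matrix.add_apply, Matrix.sub_apply, single, of_apply, one_apply]
  split_ifs <;> simp_all
  ring

end Elementary

section Unitriangular

variable {n : ℕ} {M N : Matrix (Fin n) (Fin n) K}

lemma isUpperUni_iff : IsUpperUni M ↔ M.IsUpperTriangular ∧ ∀ i, M i i = 1 :=
  ⟨fun h => ⟨fun _ _ hij => h.2 _ _ hij, h.1⟩, fun h => ⟨h.2, fun _ _ hij => h.1 hij⟩⟩

lemma IsUpperUni.transpose (hM : IsUpperUni M) : IsLowerUni Mᵀ :=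
  ⟨hM.1, fun i j h => hM.2 j i h⟩

lemma IsLowerUni.transpose (hM : IsLowerUni M) : IsUpperUni Mᵀ :=
  ⟨hM.1, fun i j h => hM.2 j i h⟩

lemma isUpperUni_one : IsUpperUni (1 : Matrix (Fin n) (Fin n) K) :=
  ⟨fun _ => one_apply_eq _, fun _ _ h => one_apply_ne h.ne'⟩

lemma isUpperUni_transvection {p q : Fin n} (hpq : p < q) (c : K) :
    IsUpperUni (transvection p q c) :=
  isUpperUni_iff.2 ⟨blockTriangular_transvection hpq.le c, fun i => by
    rw [transvection, Matrix.add_apply, one_apply_eq,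
      single_apply_of_ne _ _ _ _ _ fun h => hpq.ne (h.1.trans h.2.symm), add_zero]⟩

lemma Matrix.IsUpperTriangular.mul_apply_self (hM : M.IsUpperTriangular)
    (hN : N.IsUpperTriangular) (i : Fin n) : (M * N) i i = M i i * N i i := by
  rw [mul_apply, Finset.sum_eq_single i]
  · intro k _ hk
    rcases lt_or_gt_of_ne hk with h | h
    · rw [hM h, zero_mul]
    · rw [hN h, mul_zero]
  · simp

lemma IsUpperUni.mul (hM : IsUpperUni M) (hN : IsUpperUni N) : IsUpperUni (M * N) := by
  rw [isUpperUni_iff] at hM hN ⊢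
  exact ⟨hM.1.mul hN.1, fun i => by rw [hM.1.mul_apply_self hN.1, hM.2, hN.2, one_mul]⟩

lemma IsUpperUni.inv (hM : IsUpperUni M) : IsUpperUni M⁻¹ := by
  rw [isUpperUni_iff] at hM ⊢
  have hdet : IsUnit M.det := by simp [det_of_isUpperTriangular hM.1, hM.2]
  have := invertibleOfIsUnitDet M hdet
  have hinv : M⁻¹.IsUpperTriangular := blockTriangular_inv_of_blockTriangular hM.1
  refine ⟨hinv, fun i => ?_⟩
  have := congrFun (congrFun (mul_nonsing_inv M hdet) i) i
  rwa [hM.1.mul_apply_self hinv, hM.2, one_mul, one_apply_eq] at this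

lemma IsLowerUni.inv (hM : IsLowerUni M) : IsLowerUni M⁻¹ := by
  simpa [transpose_nonsing_inv] using hM.transpose.inv.transpose

end Unitriangular

section Words

lemma sigmaFun_sigmaFun (i x : ℕ) : sigmaFun i (sigmaFun i x) = x := by
  unfold sigmaFun; split_ifs <;> omega

lemma sigmaFun_lt_sigmaFun_iff {i x y : ℕ} (h : ¬(x = i ∧ y = i + 1))
    (h' : ¬(x = i + 1 ∧ y = i)) : sigmaFun i x < sigmaFun i y ↔ x < y := by
  unfold sigmaFun; split_ifs <;> omega

lemma wordPerm_cons (i : ℕ) (l : List ℕ) : wordPerm (i :: l) = sigmaFun i ∘ wordPerm l := rfl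

lemma wordPerm_append (l₁ l₂ : List ℕ) : wordPerm (l₁ ++ l₂) = wordPerm l₁ ∘ wordPerm l₂ := by
  induction l₁ with
  | nil => rfl
  | cons i l ih => rw [List.cons_append, wordPerm_cons, wordPerm_cons, ih]; rfl

lemma wordPerm_wordPerm_reverse (l : List ℕ) (x : ℕ) :
    wordPerm l (wordPerm l.reverse x) = x := by
  induction l generalizing x with
  | nil => rfl
  | cons i l ih =>
    rw [List.reverse_cons, wordPerm_append, wordPerm_cons, Function.comp_apply,
      Function.comp_apply, ih]
    exact sigmaFun_sigmaFun i x

lemma wordPerm_injective (l : List ℕ) : Function.Injective (wordPerm l) :=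
  Function.LeftInverse.injective (g := wordPerm l.reverse) fun x => by
    simpa using wordPerm_wordPerm_reverse l.reverse x

variable {n : ℕ} {l : List ℕ}

lemma wordPerm_mem_Icc (hl : ∀ i ∈ l, 1 ≤ i ∧ i ≤ n - 1) {k : ℕ} (hk : 1 ≤ k ∧ k ≤ n) :
    1 ≤ wordPerm l k ∧ wordPerm l k ≤ n := by
  induction l with
  | nil => exact hk
  | cons i l ih =>
    have hi := hl i List.mem_cons_self
    have := ih fun j hj => hl j (List.mem_cons_of_mem i hj)
    rw [wordPerm_cons, Function.comp_apply]
    unfold sigmaFun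
    split_ifs <;> omega

lemma exists_wordPerm_eq (hl : ∀ i ∈ l, 1 ≤ i ∧ i ≤ n - 1) (t : Fin n) :
    ∃ a : Fin n, wordPerm l (a + 1) = t + 1 := by
  have hk := wordPerm_mem_Icc (l := l.reverse) (fun i hi => hl i (List.mem_reverse.1 hi))
    (k := t + 1) ⟨by omega, t.isLt⟩
  refine ⟨⟨wordPerm l.reverse (t + 1) - 1, by omega⟩, ?_⟩
  rw [Fin.val_mk, Nat.sub_add_cancel hk.1, wordPerm_wordPerm_reverse]

end Words

def inversionsAt (f : ℕ → ℕ) (j : ℕ) : ℕ := ((Finset.Ico 1 j).filter fun m => f j < f m).card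

def inversionCount (n : ℕ) (f : ℕ → ℕ) : ℕ := ∑ b : Fin n, inversionsAt f (b + 1)

section Inversions

lemma inversionsAt_id (j : ℕ) : inversionsAt id j = 0 := by
  rw [inversionsAt, Finset.card_eq_zero, Finset.filter_eq_empty_iff]
  intro m hm
  rw [Finset.mem_Ico] at hm
  exact fun h => by rw [id, id] at h; omega

lemma inversionsAt_sigmaFun_comp {g : ℕ → ℕ} (hg : Function.Injective g) {i a b : ℕ}
    (ha : g a = i) (hb : g b = i + 1) (ha1 : 1 ≤ a) (hab : a < b) (j : ℕ) :
    inversionsAt (sigmaFun i ∘ g) j = inversionsAt g j + if j = b then 1 else 0 := by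
  have hga (m : ℕ) : g m = i ↔ m = a := ⟨fun h => hg (h.trans ha.symm), fun h => h ▸ ha⟩
  have hgb (m : ℕ) : g m = i + 1 ↔ m = b := ⟨fun h => hg (h.trans hb.symm), fun h => h ▸ hb⟩
  unfold inversionsAt
  split_ifs with hj
  · subst hj
    rw [← Finset.card_insert_of_notMem (a := a) (by simp [ha, hb])]
    congr 1
    ext m
    have := hga m
    have := hgb m
    simp only [Finset.mem_filter, Finset.mem_insert, Finset.mem_Ico, Function.comp_apply, hb]
    unfold sigmaFun
    split_ifs <;> omega
  · rw [add_zero]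
    congr 1
    refine Finset.filter_congr fun m hm => sigmaFun_lt_sigmaFun_iff ?_ ?_
    · rw [hga, hgb]; simp only [Finset.mem_Ico] at hm; omega
    · rw [hga, hgb]; omega

lemma inversionsAt_sigmaFun {i : ℕ} (hi : 1 ≤ i) (j : ℕ) :
    inversionsAt (sigmaFun i) j = if j = i + 1 then 1 else 0 := by
  simpa [inversionsAt_id] using
    inversionsAt_sigmaFun_comp (g := id) Function.injective_id rfl rfl hi (Nat.lt_succ_self i) j

variable {n : ℕ}

lemma inversionCount_sigmaFun_comp_of_lt {g : ℕ → ℕ} (hg : Function.Injective g) {i : ℕ}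
    {a b : Fin n} (ha : g (a + 1) = i) (hb : g (b + 1) = i + 1) (hab : a < b) :
    inversionCount n (sigmaFun i ∘ g) = inversionCount n g + 1 := by
  simp only [inversionCount, inversionsAt_sigmaFun_comp hg ha hb (by omega)
    (Nat.add_lt_add_right hab 1), Finset.sum_add_distrib, add_right_inj]
  rw [Finset.sum_eq_single b (fun c _ hc => if_neg fun h => hc (Fin.ext (by omega)))
    (by simp), if_pos rfl]

lemma inversionCount_sigmaFun_comp {g : ℕ → ℕ} (hg : Function.Injective g) {i : ℕ}
    {a b : Fin n} (ha : g (a + 1) = i) (hb : g (b + 1) = i + 1) :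
    (a < b ∧ inversionCount n (sigmaFun i ∘ g) = inversionCount n g + 1) ∨
      (b < a ∧ inversionCount n g = inversionCount n (sigmaFun i ∘ g) + 1) := by
  have hab : a ≠ b := fun h => by rw [h, hb] at ha; omega
  rcases lt_or_gt_of_ne hab with hab | hab
  · exact Or.inl ⟨hab, inversionCount_sigmaFun_comp_of_lt hg ha hb hab⟩
  · refine Or.inr ⟨hab, ?_⟩
    have hσ : sigmaFun i ∘ (sigmaFun i ∘ g) = g := funext fun x => sigmaFun_sigmaFun i (g x)
    conv_lhs => rw [← hσ]
    exact inversionCount_sigmaFun_comp_of_lt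
      ((Function.LeftInverse.injective (sigmaFun_sigmaFun i)).comp hg)
      (by simp [hb, sigmaFun]) (by simp [ha, sigmaFun]) hab

lemma exists_wordPerm_eq_pair {l : List ℕ} (hl : ∀ i ∈ l, 1 ≤ i ∧ i ≤ n - 1) {i : ℕ}
    (hi : 1 ≤ i ∧ i ≤ n - 1) :
    ∃ a b : Fin n, wordPerm l (a + 1) = i ∧ wordPerm l (b + 1) = i + 1 := by
  obtain ⟨a, ha⟩ := exists_wordPerm_eq hl ⟨i - 1, by omega⟩
  obtain ⟨b, hb⟩ := exists_wordPerm_eq hl ⟨i, by omega⟩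
  exact ⟨a, b, by rw [ha]; simp only; omega, hb⟩

lemma inversionCount_wordPerm_le {l : List ℕ} (hl : ∀ i ∈ l, 1 ≤ i ∧ i ≤ n - 1) :
    inversionCount n (wordPerm l) ≤ l.length := by
  induction l with
  | nil =>
    simp [wordPerm, inversionCount, inversionsAt_id]
  | cons i l ih =>
    have hl' : ∀ j ∈ l, 1 ≤ j ∧ j ≤ n - 1 := fun j hj => hl j (List.mem_cons_of_mem i hj)
    obtain ⟨a, b, ha, hb⟩ := exists_wordPerm_eq_pair hl' (hl i List.mem_cons_self)
    have := ih hl'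
    rw [wordPerm_cons, List.length_cons]
    rcases inversionCount_sigmaFun_comp (wordPerm_injective l) ha hb with h | h <;> omega

lemma inversionCount_wordPerm_cons {i : ℕ} {l : List ℕ} (hl : ∀ j ∈ i :: l, 1 ≤ j ∧ j ≤ n - 1)
    (hred : inversionCount n (wordPerm (i :: l)) = (i :: l).length) :
    inversionCount n (wordPerm l) = l.length ∧
      ∃ a b : Fin n, a < b ∧ wordPerm l (a + 1) = i ∧ wordPerm l (b + 1) = i + 1 := by
  have hl' : ∀ j ∈ l, 1 ≤ j ∧ j ≤ n - 1 := fun j hj => hl j (List.mem_cons_of_mem i hj)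
  obtain ⟨a, b, ha, hb⟩ := exists_wordPerm_eq_pair hl' (hl i List.mem_cons_self)
  have hle := inversionCount_wordPerm_le hl'
  rw [wordPerm_cons, List.length_cons] at hred
  rcases inversionCount_sigmaFun_comp (wordPerm_injective l) ha hb with ⟨hab, h⟩ | ⟨_, h⟩
  · exact ⟨by omega, a, b, hab, ha, hb⟩
  · omega

lemma inversionCount_eq_length {l : List ℕ} (hl : IsReducedWord n l) :
    inversionCount n (wordPerm l) = l.length := by
  obtain ⟨hlen, -, hperm⟩ := hl
  have hinv (b : Fin n) : inversionsAt (wordPerm l) (b + 1) = b := by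
    rw [inversionsAt, Finset.filter_true_of_mem, Nat.card_Ico, Nat.add_sub_cancel]
    intro m hm
    rw [Finset.mem_Ico] at hm
    rw [hperm _ (by omega) (by omega), hperm _ (by omega) (by omega)]
    omega
  simp only [inversionCount, hinv, hlen]
  rw [Fin.sum_univ_eq_sum_range (fun b => b) n, Finset.sum_range_id]

end Inversions

-- Column `b` has its entry in row `f (b + 1) - 1` (`f` acts on `1, …, n`). The signs are those
-- of the product of the `s̄_i` along any reduced word for `f`.
variable (K) in
def signedPermMatrix (n : ℕ) (f : ℕ → ℕ) : Matrix (Fin n) (Fin n) K :=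
  of fun a b => if (a : ℕ) + 1 = f (b + 1) then (-1) ^ inversionsAt f (b + 1) else 0

section SignedPerm

variable {n : ℕ}

lemma neg_one_pow_mul_self (k : ℕ) : (-1 : K) ^ k * (-1) ^ k = 1 := by
  rw [← mul_pow, neg_one_mul, neg_neg, one_pow]

lemma signedPermMatrix_congr {f g : ℕ → ℕ} (h : ∀ k, 1 ≤ k → k ≤ n → f k = g k) :
    signedPermMatrix K n f = signedPermMatrix K n g := by
  have hinv (b : Fin n) : inversionsAt f (b + 1) = inversionsAt g (b + 1) := by
    rw [inversionsAt, inversionsAt, h _ (by omega) b.isLt]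
    congr 1
    refine Finset.filter_congr fun m hm => ?_
    rw [Finset.mem_Ico] at hm
    rw [h m hm.1 (by omega)]
  ext a b
  simp only [signedPermMatrix, of_apply, hinv, h _ (by omega : 1 ≤ (b : ℕ) + 1) b.isLt]

lemma signedPermMatrix_id : signedPermMatrix K n id = 1 := by
  ext a b
  simp [signedPermMatrix, one_apply, inversionsAt_id, Fin.ext_iff]

lemma signedPermMatrix_mul_signedPermMatrix {f g : ℕ → ℕ}
    (hg : ∀ b : Fin n, 1 ≤ g (b + 1) ∧ g (b + 1) ≤ n)
    (hinv : ∀ b : Fin n,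
      inversionsAt (f ∘ g) (b + 1) = inversionsAt f (g (b + 1)) + inversionsAt g (b + 1)) :
    signedPermMatrix K n f * signedPermMatrix K n g =
      signedPermMatrix K n (f ∘ g) := by
  ext a b
  have hb := hg b
  rw [mul_apply, Finset.sum_eq_single ⟨g (b + 1) - 1, by omega⟩]
  · simp only [signedPermMatrix, of_apply, Nat.sub_add_cancel hb.1, if_true,
      Function.comp_apply, hinv, pow_add]
    split_ifs <;> simp
  · intro c _ hc
    simp only [signedPermMatrix, of_apply]
    rw [if_neg (c := (c : ℕ) + 1 = g (b + 1)) fun h => hc (Fin.ext (by simp only; omega)),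
      mul_zero]
  · simp

lemma transvection_mul_signedPermMatrix {f : ℕ → ℕ} (hf : Function.Injective f)
    {p q a b : Fin n} (ha : f (a + 1) = p + 1) (hb : f (b + 1) = q + 1) (c : K) :
    transvection p q c * signedPermMatrix K n f =
      signedPermMatrix K n f *
        transvection a b (c * (-1) ^ inversionsAt f (b + 1) * (-1) ^ inversionsAt f (a + 1)) := by
  suffices single p q c * signedPermMatrix K n f = signedPermMatrix K n f *
      single a b (c * (-1) ^ inversionsAt f (b + 1) * (-1) ^ inversionsAt f (a + 1)) by
    rw [transvection, transvection, add_mul, mul_add, one_mul, mul_one, this]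
  ext x y
  have hfb : ∀ y : Fin n, (q : ℕ) + 1 = f (y + 1) ↔ y = b := fun y =>
    ⟨fun h => Fin.ext (by have := hf (h.symm.trans hb.symm); omega), fun h => h ▸ hb.symm⟩
  have hfa : (x : ℕ) + 1 = f (a + 1) ↔ x = p := by rw [ha, Fin.ext_iff]; omega
  by_cases hx : x = p <;> by_cases hy : y = b
  · subst hx hy
    simp only [single_mul_apply_same, mul_single_apply_same, signedPermMatrix, of_apply,
      (hfb y).2 rfl, hfa.2 rfl, if_true]
    linear_combination (-((-1) ^ inversionsAt f (y + 1) * c)) *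
      (neg_one_pow_mul_self (K := K) (inversionsAt f (a + 1)))
  · subst hx
    rw [single_mul_apply_same, mul_single_apply_of_ne _ _ _ _ _ hy, signedPermMatrix, of_apply,
      if_neg fun h => hy ((hfb y).1 h), mul_zero]
  · subst hy
    rw [single_mul_apply_of_ne _ _ _ _ _ hx, mul_single_apply_same, signedPermMatrix, of_apply,
      if_neg fun h => hx (hfa.1 h), zero_mul]
  · rw [single_mul_apply_of_ne _ _ _ _ _ hx, mul_single_apply_of_ne _ _ _ _ _ hy]

variable {f : ℕ → ℕ} {e : Fin n → Fin n}

lemma signedPermMatrix_apply_of_involutive (he : ∀ a : Fin n, f (a + 1) = e a + 1)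
    (he' : Function.Involutive e) (a c : Fin n) :
    signedPermMatrix K n f a c =
      if c = e a then (-1) ^ inversionsAt f (e a + 1) else 0 := by
  rw [signedPermMatrix, of_apply, he]
  by_cases hc : c = e a
  · subst hc; rw [he' a, if_pos rfl, if_pos rfl]
  · rw [if_neg hc, if_neg fun h => hc (by rw [← he' c]; exact congrArg e (Fin.ext (by omega)).symm)]

lemma signedPermMatrix_mul_mul_transpose_apply (he : ∀ a : Fin n, f (a + 1) = e a + 1)
    (he' : Function.Involutive e) (M : Matrix (Fin n) (Fin n) K) (a b : Fin n) :
    (signedPermMatrix K n f * M * (signedPermMatrix K n f)ᵀ) a b =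
      (-1) ^ inversionsAt f (e a + 1) * M (e a) (e b) * (-1) ^ inversionsAt f (e b + 1) := by
  simp only [mul_apply, transpose_apply, signedPermMatrix_apply_of_involutive he he',
    ite_mul, zero_mul, mul_ite, mul_zero, Finset.sum_ite_eq', Finset.mem_univ, if_true]

lemma signedPermMatrix_mul_transpose (he : ∀ a : Fin n, f (a + 1) = e a + 1)
    (he' : Function.Involutive e) :
    signedPermMatrix K n f * (signedPermMatrix K n f)ᵀ = 1 := by
  ext a b
  have := signedPermMatrix_mul_mul_transpose_apply he he' (1 : Matrix (Fin n) (Fin n) K) a b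
  rw [Matrix.mul_one] at this
  rw [this, one_apply, one_apply]
  by_cases h : a = b
  · subst h; rw [if_pos rfl, if_pos rfl, mul_one, neg_one_pow_mul_self]
  · rw [if_neg (he'.injective.ne h), if_neg h, mul_zero, zero_mul]

lemma isUpperUni_signedPermMatrix_conj (he : ∀ a : Fin n, f (a + 1) = e a + 1)
    (he' : Function.Involutive e) {M : Matrix (Fin n) (Fin n) K} (hdiag : ∀ a, M a a = 1)
    (hM : ∀ a b, b < a → M (e a) (e b) = 0) :
    IsUpperUni (signedPermMatrix K n f * M * (signedPermMatrix K n f)ᵀ) := by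
  refine ⟨fun a => ?_, fun a b hab => ?_⟩
  · rw [signedPermMatrix_mul_mul_transpose_apply he he', hdiag, mul_one, neg_one_pow_mul_self]
  · rw [signedPermMatrix_mul_mul_transpose_apply he he', hM a b hab, mul_zero, zero_mul]

end SignedPerm

section Sbar

variable {n : ℕ} {p q : Fin n}

lemma sigmaFun_add_one_eq_swap (hpq : (p : ℕ) + 1 = q) (a : Fin n) :
    sigmaFun q (a + 1) = Equiv.swap p q a + 1 := by
  rw [Equiv.swap_apply_def]
  unfold sigmaFun
  simp only [Fin.ext_iff]
  split_ifs <;> omega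

lemma sbar_eq_signedPermMatrix (hpq : (p : ℕ) + 1 = q) :
    sbar n q = signedPermMatrix K n (sigmaFun q) := by
  ext a b
  rw [sbar_eq hpq, signedPermMatrix, of_apply, sigmaFun_add_one_eq_swap hpq,
    inversionsAt_sigmaFun (by omega)]
  simp only [Matrix.add_apply, Matrix.sub_apply, one_apply, single, of_apply,
    Equiv.swap_apply_def, Fin.ext_iff]
  split_ifs <;> first | (exfalso; omega) | norm_num

lemma sbar_mul_signedPermMatrix (hpq : (p : ℕ) + 1 = q) {v : ℕ → ℕ}
    (hv : ∀ b : Fin n, 1 ≤ v (b + 1) ∧ v (b + 1) ≤ n) (hinj : Function.Injective v) {a b : Fin n}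
    (hab : a < b) (ha : v (a + 1) = q) (hb : v (b + 1) = q + 1) :
    sbar n q * signedPermMatrix K n v = signedPermMatrix K n (sigmaFun q ∘ v) := by
  rw [sbar_eq_signedPermMatrix hpq]
  refine signedPermMatrix_mul_signedPermMatrix hv fun c => ?_
  rw [inversionsAt_sigmaFun_comp hinj ha hb (by omega) (by omega),
    inversionsAt_sigmaFun (by omega), add_comm]
  congr 2
  exact propext ⟨fun h => by rw [h, hb], fun h => by rw [← hb] at h; exact hinj h⟩

lemma sbar_mul_transpose (hpq : (p : ℕ) + 1 = q) :
    sbar n q * (sbar n q)ᵀ = (1 : Matrix (Fin n) (Fin n) K) := by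
  rw [sbar_eq_signedPermMatrix hpq]
  exact signedPermMatrix_mul_transpose (sigmaFun_add_one_eq_swap hpq) (Equiv.swap_apply_self p q)

lemma isUpperUni_sbar_conj (hpq : (p : ℕ) + 1 = q) {U : Matrix (Fin n) (Fin n) K}
    (hU : IsUpperUni U) (hUpq : U p q = 0) : IsUpperUni (sbar n q * U * (sbar n q)ᵀ) := by
  rw [sbar_eq_signedPermMatrix hpq]
  refine isUpperUni_signedPermMatrix_conj (sigmaFun_add_one_eq_swap hpq)
    (Equiv.swap_apply_self p q) hU.1 fun a b hab => ?_
  by_cases h : a = q ∧ b = p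
  · rw [h.1, h.2, Equiv.swap_apply_right, Equiv.swap_apply_left, hUpq]
  · refine hU.2 _ _ ?_
    simp only [Equiv.swap_apply_def, Fin.lt_def, Fin.ext_iff] at hab h ⊢
    split_ifs <;> omega

end Sbar

section Bruhat

variable {n : ℕ}

lemma IsUpperUni.exists_eq_mul_transvection {U : Matrix (Fin n) (Fin n) K} (hU : IsUpperUni U)
    {p q : Fin n} (hpq : p < q) :
    ∃ U₀ c, IsUpperUni U₀ ∧ U₀ p q = 0 ∧ U = U₀ * transvection p q c := by
  refine ⟨U * transvection p q (-U p q), U p q, hU.mul (isUpperUni_transvection hpq _), ?_, ?_⟩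
  · rw [mul_transvection_apply_same, hU.1]; ring
  · rw [mul_assoc, transvection_mul_transvection_same _ _ hpq.ne, neg_add_cancel,
      transvection_zero, mul_one]

lemma exists_xnegMat_mul_eq {p q : Fin n} (hpq : (p : ℕ) + 1 = q) {v : ℕ → ℕ}
    (hv : ∀ b : Fin n, 1 ≤ v (b + 1) ∧ v (b + 1) ≤ n) (hinj : Function.Injective v)
    {a b : Fin n} (hab : a < b) (ha : v (a + 1) = q) (hb : v (b + 1) = q + 1) {z : K} (hz : z ≠ 0)
    {U V : Matrix (Fin n) (Fin n) K} (hU : IsUpperUni U) (hV : IsUpperUni V) :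
    ∃ U' V', IsUpperUni U' ∧ IsUpperUni V' ∧
      xnegMat n q z * (U * signedPermMatrix K n v * V) =
        U' * signedPermMatrix K n (sigmaFun q ∘ v) * V' := by
  have hpq' : p < q := Fin.lt_def.2 (by omega)
  obtain ⟨U₀, c, hU₀, hU₀pq, hsplit⟩ :=
    ((isUpperUni_transvection hpq' z).mul hU).exists_eq_mul_transvection hpq'
  set P := signedPermMatrix K n v
  set d := c * (-1) ^ inversionsAt v (b + 1) * (-1) ^ inversionsAt v (a + 1)
  have hmove : transvection p q c * P = P * transvection a b d :=
    transvection_mul_signedPermMatrix hinj (by rw [ha, hpq]) hb c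
  have hss : (sbar n q)ᵀ * sbar n q = (1 : Matrix (Fin n) (Fin n) K) :=
    mul_eq_one_comm.1 (sbar_mul_transpose hpq)
  refine ⟨transvection p q z⁻¹ * (sbar n q * U₀ * (sbar n q)ᵀ), transvection a b d * V,
    (isUpperUni_transvection hpq' _).mul (isUpperUni_sbar_conj hpq hU₀ hU₀pq),
    (isUpperUni_transvection hab _).mul hV, ?_⟩
  rw [← sbar_mul_signedPermMatrix hpq hv hinj hab ha hb, xnegMat_eq_mul hpq hz,
    xMat_eq_transvection hpq, xMat_eq_transvection hpq]
  calc transvection p q z⁻¹ * sbar n q * transvection p q z * (U * P * V)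
      = transvection p q z⁻¹ * sbar n q * (transvection p q z * U) * P * V := by
        simp only [mul_assoc]
    _ = transvection p q z⁻¹ * sbar n q * U₀ * (transvection p q c * P) * V := by
        rw [hsplit]; simp only [mul_assoc]
    _ = transvection p q z⁻¹ * sbar n q * U₀ * ((sbar n q)ᵀ * sbar n q) * P *
          transvection a b d * V := by
        rw [hmove, hss, mul_one]; simp only [mul_assoc]
    _ = transvection p q z⁻¹ * (sbar n q * U₀ * (sbar n q)ᵀ) * (sbar n q * P) *
          (transvection a b d * V) := by
        simp only [mul_assoc]

lemma xnegProd_cons (i : ℕ) (l : List ℕ) (z : ℕ → K) :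
    xnegProd n (i :: l) z = xnegMat n i (z 1) * xnegProd n l (fun k => z (k + 1)) := by
  rw [xnegProd, xnegProd, List.length_cons, List.range_succ_eq_map, List.map_cons, List.map_map,
    List.prod_cons]
  rfl

theorem exists_xnegProd_eq {l : List ℕ} (hl : ∀ i ∈ l, 1 ≤ i ∧ i ≤ n - 1)
    (hred : inversionCount n (wordPerm l) = l.length) {z : ℕ → K}
    (hz : ∀ k, 1 ≤ k → k ≤ l.length → z k ≠ 0) :
    ∃ U V, IsUpperUni U ∧ IsUpperUni V ∧
      xnegProd n l z = U * signedPermMatrix K n (wordPerm l) * V := by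
  induction l generalizing z with
  | nil =>
    refine ⟨1, 1, isUpperUni_one, isUpperUni_one, ?_⟩
    rw [wordPerm, List.foldr_nil, signedPermMatrix_id, one_mul, one_mul]
    rfl
  | cons i l ih =>
    have hl' : ∀ j ∈ l, 1 ≤ j ∧ j ≤ n - 1 := fun j hj => hl j (List.mem_cons_of_mem i hj)
    have hi := hl i List.mem_cons_self
    obtain ⟨hred', a, b, hab, ha, hb⟩ := inversionCount_wordPerm_cons hl hred
    obtain ⟨U, V, hU, hV, hA⟩ := ih hl' hred' fun k hk1 hk2 =>
      hz (k + 1) (by omega) (by rw [List.length_cons]; omega)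
    rw [xnegProd_cons, hA, wordPerm_cons]
    exact exists_xnegMat_mul_eq (p := ⟨i - 1, by omega⟩) (q := ⟨i, by omega⟩)
      (Nat.sub_add_cancel hi.1) (fun b => wordPerm_mem_Icc hl' (by omega))
      (wordPerm_injective l) hab ha hb (hz 1 le_rfl (by simp)) hU hV

end Bruhat

section LongestWord

lemma i0List_succ (m : ℕ) : i0List (m + 1) = List.range' 1 m ++ i0List m := by
  cases m with
  | zero => rfl
  | succ m =>
    simp only [i0List, List.range_succ_eq_map, List.map_cons,
      List.foldr_cons, List.map_map, Function.comp_def, Nat.succ_sub_succ, Nat.sub_zero]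

lemma length_i0List (n : ℕ) : (i0List n).length = n * (n - 1) / 2 := by
  induction n with
  | zero => rfl
  | succ m ih =>
    rw [i0List_succ, List.length_append, List.length_range', ih, Nat.triangle_succ]
    ring

lemma mem_i0List {n i : ℕ} (hi : i ∈ i0List n) : 1 ≤ i ∧ i ≤ n - 1 := by
  induction n with
  | zero => simp [i0List] at hi
  | succ m ih =>
    rw [i0List_succ, List.mem_append, List.mem_range'_1] at hi
    rcases hi with hi | hi
    · omega
    · have := ih hi; omega

lemma wordPerm_range' (m k : ℕ) :
    wordPerm (List.range' 1 m) k = if 1 ≤ k ∧ k ≤ m then k + 1 else if k = m + 1 then 1 else k := by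
  induction m generalizing k with
  | zero =>
    rw [List.range'_zero, wordPerm, List.foldr_nil, id]
    split_ifs <;> omega
  | succ m ih =>
    rw [List.range'_concat, wordPerm_append, Function.comp_apply,
      show wordPerm [1 + 1 * m] k = sigmaFun (1 + 1 * m) k from rfl, ih]
    unfold sigmaFun
    split_ifs <;> omega

lemma wordPerm_i0List (n k : ℕ) (hk : 1 ≤ k) :
    wordPerm (i0List n) k = if k ≤ n then n + 1 - k else k := by
  induction n with
  | zero => simp [i0List, wordPerm]; omega
  | succ m ih =>
    rw [i0List_succ, wordPerm_append, Function.comp_apply, ih, wordPerm_range']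
    split_ifs <;> omega

lemma isReducedWord_i0List (n : ℕ) : IsReducedWord n (i0List n) :=
  ⟨length_i0List n, fun _ => mem_i0List, fun k hk1 hk2 => by
    rw [wordPerm_i0List n k hk1, if_pos hk2]⟩

end LongestWord

section LongestElement

variable {n : ℕ}

lemma prod_map_sbar_eq_signedPermMatrix {l : List ℕ} (hl : ∀ i ∈ l, 1 ≤ i ∧ i ≤ n - 1)
    (hred : inversionCount n (wordPerm l) = l.length) :
    (l.map (sbar n)).prod = signedPermMatrix K n (wordPerm l) := by
  induction l with
  | nil => exact signedPermMatrix_id.symm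
  | cons i l ih =>
    have hl' : ∀ j ∈ l, 1 ≤ j ∧ j ≤ n - 1 := fun j hj => hl j (List.mem_cons_of_mem i hj)
    have hi := hl i List.mem_cons_self
    obtain ⟨hred', a, b, hab, ha, hb⟩ := inversionCount_wordPerm_cons hl hred
    rw [List.map_cons, List.prod_cons, ih hl' hred', wordPerm_cons]
    exact sbar_mul_signedPermMatrix (p := ⟨i - 1, by omega⟩) (q := ⟨i, by omega⟩)
      (Nat.sub_add_cancel hi.1) (fun b => wordPerm_mem_Icc hl' (by omega))
      (wordPerm_injective l) hab ha hb

lemma w0Mat_eq_signedPermMatrix : w0Mat n = signedPermMatrix K n (fun k => n + 1 - k) := by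
  have h := isReducedWord_i0List n
  rw [w0Mat, prod_map_sbar_eq_signedPermMatrix h.2.1 (inversionCount_eq_length h)]
  exact signedPermMatrix_congr h.2.2

lemma isUpperUni_w0Mat_conj {L : Matrix (Fin n) (Fin n) K} (hL : IsLowerUni L) :
    IsUpperUni (w0Mat n * L * (w0Mat n)ᵀ) := by
  rw [w0Mat_eq_signedPermMatrix]
  exact isUpperUni_signedPermMatrix_conj (e := Fin.rev) (fun a => by rw [Fin.val_rev]; omega)
    Fin.rev_rev hL.1 fun a b hab => hL.2 _ _ (Fin.rev_lt_rev.2 hab)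

end LongestElement

theorem stmt0_general (n : ℕ) (l : List ℕ) (hl : IsReducedWord n l)
    (z : ℕ → K) (hz : ∀ k, 1 ≤ k → k ≤ n * (n - 1) / 2 → z k ≠ 0) :
    ∃ L U : Matrix (Fin n) (Fin n) K, IsLowerUni L ∧ IsUpperUni U ∧
      (w0Mat n * (xnegProd n l z)ᵀ)⁻¹ = L * U := by
  obtain ⟨U, V, hU, hV, hA⟩ := exists_xnegProd_eq hl.2.1 (inversionCount_eq_length hl)
    fun k hk1 hk2 => hz k hk1 (hl.1 ▸ hk2)
  have hP : signedPermMatrix K n (wordPerm l) = w0Mat n := by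
    rw [w0Mat_eq_signedPermMatrix]
    exact signedPermMatrix_congr hl.2.2
  have hfactor : w0Mat n * (xnegProd n l z)ᵀ = (w0Mat n * Vᵀ * (w0Mat n)ᵀ) * Uᵀ := by
    rw [hA, hP, transpose_mul, transpose_mul]
    simp only [mul_assoc]
  exact ⟨(Uᵀ)⁻¹, (w0Mat n * Vᵀ * (w0Mat n)ᵀ)⁻¹, hU.transpose.inv,
    (isUpperUni_w0Mat_conj hV.transpose).inv, by rw [hfactor, Matrix.mul_inv_rev]⟩

theorem stmt0 (n : ℕ) (hn : 2 ≤ n) (l : List ℕ) (hl : IsReducedWord n l)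
    (z : ℕ → K) (hz : ∀ k, 1 ≤ k → k ≤ n * (n - 1) / 2 → z k ≠ 0) :
    ∃ L U : Matrix (Fin n) (Fin n) K, IsLowerUni L ∧ IsUpperUni U ∧
      (w0Mat n * (xnegProd n l z)ᵀ)⁻¹ = L * U :=
  stmt0_general n l hl z hz
end
end

section
/- Let m = (m_1,…,m_N) ∈ (K^×)^N and let x : V → K^× satisfy: (i) x((i,j))/x((i+1,j)) = R_{ij}(m) for every vertical arrow, i.e. for all 1 ≤ j ≤ i ≤ n−1; and (ii) the critical point conditions hold at every dot vertex. Then for every dot vertex (i,k) (with k < i), the sum of the values of the arrows with tail (i,k) equals m_{s_k+i−k}. -/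
noncomputable section

variable {K : Type*} [Field K]

/-- The critical point condition of the GL_n quiver at a dot vertex `(i,j)` (so `1 ≤ j < i ≤ n`),
for a decoration `x` of the vertices: the sum of the values `x(head)/x(tail)` of the arrows
with head `(i,j)` equals the corresponding sum over the arrows with tail `(i,j)`.  The incoming
arrows are the vertical one from `(i+1,j)` (present iff `i < n`) and the horizontal one from
`(i,j+1)`; the outgoing arrows are the vertical one to `(i-1,j)` and the horizontal one to
`(i,j-1)` (present iff `2 ≤ j`). -/
def critCond (n : ℕ) (x : ℕ → ℕ → K) (i j : ℕ) : Prop :=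
  (if i < n then x i j / x (i + 1) j else 0) + x i j / x i (j + 1)
    = x (i - 1) j / x i j + (if 2 ≤ j then x i (j - 1) / x i j else 0)

/-- The ideal-coordinate decoration: the prescribed value `R_{ij}(m)` of the vertical arrow
with head `(i,j)`. -/
def Rarr (n : ℕ) (m : ℕ → K) (i j : ℕ) : K :=
  (∏ r ∈ Finset.range j, m (sIdx n (j - r) + (i - j + 1 + r))) /
    (∏ r ∈ Finset.range (j - 1), m (sIdx n (j - 1 - r) + (i - j + 1 + r)))

/-- `Ξ_i`: product of the vertex values along the `i`-th diagonal (with `Ξ_{n+1} = 1`). -/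
def Xi (n : ℕ) (x : ℕ → ℕ → K) (i : ℕ) : K :=
  ∏ l ∈ Finset.Icc 1 (n + 1 - i), x (i - 1 + l) l

/-! ### Auxiliary material -/

private lemma sIdx_succ (n k : ℕ) (hk : 1 ≤ k) :
    sIdx n (k + 1) = sIdx n k + (n - k) := by
  unfold sIdx
  rw [show k + 1 - 1 = (k - 1) + 1 by omega, Finset.sum_range_succ]
  congr 1
  omega

private lemma sIdx_mono (n : ℕ) {a b : ℕ} (h : a ≤ b) : sIdx n a ≤ sIdx n b :=
  Finset.sum_le_sum_of_subset (Finset.range_subset_range.2 (by omega))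

private lemma sIdx_top {n : ℕ} (hn : 1 ≤ n) : sIdx n n = n * (n - 1) / 2 := by
  have h1 : sIdx n n = ∑ j ∈ Finset.range (n - 1), ((fun t => t + 1) ((n - 1) - 1 - j)) := by
    unfold sIdx
    refine Finset.sum_congr rfl fun j hj => ?_
    have := Finset.mem_range.1 hj
    simp only []
    omega
  rw [h1, Finset.sum_range_reflect (fun t => t + 1) (n - 1)]
  have h2 := Finset.sum_range_succ' (fun j => j) (n - 1)
  rw [show n - 1 + 1 = n from by omega] at h2
  have h3 := Finset.sum_range_id_mul_two n
  omega

/-- index bound for the `μ` entries -/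
private lemma mu_le {n t i : ℕ} (ht : 1 ≤ t) (hti : t < i) (hin : i ≤ n) :
    sIdx n t + (i - t) ≤ n * (n - 1) / 2 := by
  have h1 : sIdx n t + (i - t) ≤ sIdx n (t + 1) := by
    rw [sIdx_succ n t ht]; omega
  have h2 : sIdx n (t + 1) ≤ sIdx n n := sIdx_mono n (by omega)
  have h3 : sIdx n n = n * (n - 1) / 2 := sIdx_top (by omega)
  omega

/-- product of the `μ`'s along a row -/
private def Pfun (n : ℕ) (m : ℕ → K) (i j : ℕ) : K :=
  ∏ t ∈ Finset.Icc 1 j, m (sIdx n t + (i - t))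

private lemma Pfun_zero (n : ℕ) (m : ℕ → K) (i : ℕ) : Pfun n m i 0 = 1 := by
  unfold Pfun
  rw [Finset.Icc_eq_empty (by omega), Finset.prod_empty]

private lemma Pfun_one (n : ℕ) (m : ℕ → K) (i : ℕ) :
    Pfun n m i 1 = m (sIdx n 1 + (i - 1)) := by
  unfold Pfun
  rw [Finset.Icc_self, Finset.prod_singleton]

private lemma Pfun_succ (n : ℕ) (m : ℕ → K) (i j : ℕ) (hj : 1 ≤ j) :
    Pfun n m i j = Pfun n m i (j - 1) * m (sIdx n j + (i - j)) := by
  obtain ⟨p, rfl⟩ : ∃ p, j = p + 1 := ⟨j - 1, by omega⟩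
  unfold Pfun
  rw [Finset.prod_Icc_succ_top (by omega)]
  simp

private lemma Pfun_ne {n : ℕ} (m : ℕ → K)
    (hm : ∀ r, 1 ≤ r → r ≤ n * (n - 1) / 2 → m r ≠ 0)
    {i j : ℕ} (hji : j < i) (hin : i ≤ n) : Pfun n m i j ≠ 0 := by
  unfold Pfun
  refine Finset.prod_ne_zero_iff.2 fun t ht => ?_
  obtain ⟨h1, h2⟩ := Finset.mem_Icc.1 ht
  refine hm _ (le_trans (by omega : 1 ≤ i - t) (Nat.le_add_left _ _)) (mu_le h1 (by omega) hin)

private lemma prod_reindex (n : ℕ) (m : ℕ → K) (a b : ℕ) (hab : b ≤ a) :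
    ∏ r ∈ Finset.range b, m (sIdx n (b - r) + (a - b + 1 + r)) = Pfun n m (a + 1) b := by
  have h1 : ∀ r ∈ Finset.range b,
      m (sIdx n (b - r) + (a - b + 1 + r))
        = (fun s => m (sIdx n (s + 1) + (a - s))) (b - 1 - r) := by
    intro r hr
    have hrb := Finset.mem_range.1 hr
    have e1 : b - 1 - r + 1 = b - r := by omega
    have e2 : a - (b - 1 - r) = a - b + 1 + r := by omega
    simp only [e1, e2]
  rw [Finset.prod_congr rfl h1,
    Finset.prod_range_reflect (fun s => m (sIdx n (s + 1) + (a - s))) b]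
  unfold Pfun
  rw [← Finset.Ico_add_one_right_eq_Icc, Finset.prod_Ico_eq_prod_range]
  refine Finset.prod_congr (by norm_num) fun r hr => ?_
  have hrb : r < b := by
    have := Finset.mem_range.1 hr
    omega
  rw [Nat.add_comm 1 r]
  congr 1
  omega

private lemma Rarr_eq {n : ℕ} (m : ℕ → K) {i j : ℕ} (hj1 : 1 ≤ j) (hj : j ≤ i) :
    Rarr n m i j = Pfun n m (i + 1) j / Pfun n m i (j - 1) := by
  have hden := prod_reindex n m (i - 1) (j - 1) (by omega)
  rw [show i - 1 + 1 = i from by omega] at hden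
  unfold Rarr
  rw [prod_reindex n m i j hj, ← hden]
  congr 1
  refine Finset.prod_congr rfl fun r hr => ?_
  have := Finset.mem_range.1 hr
  congr 2
  omega

private lemma mainJ {n : ℕ} (hn : 2 ≤ n) (m : ℕ → K)
    (hm : ∀ r, 1 ≤ r → r ≤ n * (n - 1) / 2 → m r ≠ 0)
    (x : ℕ → ℕ → K) (hx : ∀ i j, 1 ≤ j → j ≤ i → i ≤ n → x i j ≠ 0)
    (hvert : ∀ i j, 1 ≤ j → j ≤ i → i ≤ n - 1 → x i j / x (i + 1) j = Rarr n m i j)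
    (hcrit : ∀ i j, 1 ≤ j → j < i → i ≤ n → critCond n x i j) :
    ∀ k i, 1 ≤ k → k < i → i ≤ n →
      x i k / x i (k + 1) = m (sIdx n k + (i - k)) - (if i < n then Rarr n m i k else 0) := by
  intro k
  induction k with
  | zero => intro i h; omega
  | succ K ih =>
    intro i hk hki hin
    by_cases hK : K = 0
    · -- base case k = 1
      subst hK
      simp only [zero_add]
      have hc := hcrit i 1 le_rfl (by omega) hin
      unfold critCond at hc
      rw [if_neg (by omega : ¬ (2 : ℕ) ≤ 1)] at hc
      have hv : x (i - 1) 1 / x i 1 = Rarr n m (i - 1) 1 := by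
        have h := hvert (i - 1) 1 le_rfl (by omega) (by omega)
        rwa [show i - 1 + 1 = i from by omega] at h
      have hR : Rarr n m (i - 1) 1 = m (sIdx n 1 + (i - 1)) := by
        rw [Rarr_eq m le_rfl (by omega : 1 ≤ i - 1), show i - 1 + 1 = i from by omega,
          Pfun_one, Pfun_zero]
        simp
      rw [hv, hR] at hc
      by_cases hiltn : i < n
      · rw [if_pos hiltn] at hc ⊢
        rw [hvert i 1 le_rfl (by omega) (by omega)] at hc
        linear_combination hc
      · rw [if_neg hiltn] at hc ⊢
        linear_combination hc
    · -- inductive step, k = K + 1 with K ≥ 1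
      have hK1 : 1 ≤ K := by omega
      -- abbreviations
      set μ := m (sIdx n (K + 1) + (i - (K + 1))) with hμdef
      set ν := m (sIdx n K + (i - 1 - K)) with hνdef
      set P1 := Pfun n m i K with hP1def
      set P0 := Pfun n m (i - 1) (K - 1) with hP0def
      -- nonvanishing
      have hP1ne : P1 ≠ 0 := Pfun_ne m hm (by omega) hin
      have hP0ne : P0 ≠ 0 := Pfun_ne m hm (by omega) (by omega)
      have hμne : μ ≠ 0 :=
        hm _ (le_trans (by omega : 1 ≤ i - (K + 1)) (Nat.le_add_left _ _))
          (mu_le (by omega) (by omega) hin)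
      have hνne : ν ≠ 0 :=
        hm _ (le_trans (by omega : 1 ≤ i - 1 - K) (Nat.le_add_left _ _))
          (mu_le hK1 (by omega) (by omega : i - 1 ≤ n))
      -- the two relevant R values, expressed via P
      have hR1 : Rarr n m (i - 1) K = P1 / P0 := by
        rw [Rarr_eq m hK1 (by omega : K ≤ i - 1), show i - 1 + 1 = i from by omega]
      have hR2 : Rarr n m (i - 1) (K + 1) = P1 * μ / (P0 * ν) := by
        rw [Rarr_eq m (by omega) (by omega : K + 1 ≤ i - 1), show i - 1 + 1 = i from by omega,
          show K + 1 - 1 = K from by omega,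
          Pfun_succ n m i (K + 1) (by omega), show K + 1 - 1 = K from by omega,
          Pfun_succ n m (i - 1) K hK1]
      have hR1ne : Rarr n m (i - 1) K ≠ 0 := by
        rw [hR1]; exact div_ne_zero hP1ne hP0ne
      have hR2ne : Rarr n m (i - 1) (K + 1) ≠ 0 := by
        rw [hR2]; exact div_ne_zero (mul_ne_zero hP1ne hμne) (mul_ne_zero hP0ne hνne)
      -- vertical arrow relations
      have hv1 : x (i - 1) K = Rarr n m (i - 1) K * x i K := by
        have h := hvert (i - 1) K hK1 (by omega) (by omega)
        rw [show i - 1 + 1 = i from by omega] at h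
        exact (div_eq_iff (hx i K hK1 (by omega) hin)).1 h
      have hv2 : x (i - 1) (K + 1) = Rarr n m (i - 1) (K + 1) * x i (K + 1) := by
        have h := hvert (i - 1) (K + 1) (by omega) (by omega) (by omega)
        rw [show i - 1 + 1 = i from by omega] at h
        exact (div_eq_iff (hx i (K + 1) (by omega) (by omega) hin)).1 h
      -- transport of the horizontal value from row i to row i - 1
      have htr : x (i - 1) K / x (i - 1) (K + 1)
          = (Rarr n m (i - 1) K / Rarr n m (i - 1) (K + 1)) * (x i K / x i (K + 1)) := by
        rw [hv1, hv2]
        ring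
      -- induction hypothesis at (i-1, K)
      have ih2 : x (i - 1) K / x (i - 1) (K + 1)
          = ν - Rarr n m (i - 1) K := by
        have h := ih (i - 1) hK1 (by omega) (by omega)
        rw [if_pos (by omega : i - 1 < n)] at h
        exact h
      -- key m-identity: R2 * ν = R1 * μ
      have hkey : Rarr n m (i - 1) (K + 1) * ν = Rarr n m (i - 1) K * μ := by
        rw [hR1, hR2]
        field_simp
      -- deduce the value of x i K / x i (K+1)
      have eqA : ν - Rarr n m (i - 1) K
          = (Rarr n m (i - 1) K / Rarr n m (i - 1) (K + 1)) * (x i K / x i (K + 1)) := by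
        rw [← ih2, htr]
      have hT : x i K / x i (K + 1) = μ - Rarr n m (i - 1) (K + 1) := by
        have h2 : Rarr n m (i - 1) K * (x i K / x i (K + 1))
            = Rarr n m (i - 1) K * (μ - Rarr n m (i - 1) (K + 1)) := by
          have h3 : Rarr n m (i - 1) (K + 1) * (ν - Rarr n m (i - 1) K)
              = Rarr n m (i - 1) K * (x i K / x i (K + 1)) := by
            rw [eqA, ← mul_assoc, mul_div_cancel₀ _ hR2ne]
          linear_combination -h3 + hkey
        exact mul_left_cancel₀ hR1ne h2
      -- critical point condition at (i, K+1)
      have hc := hcrit i (K + 1) (by omega) hki hin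
      unfold critCond at hc
      rw [if_pos (by omega : 2 ≤ K + 1)] at hc
      simp only [Nat.add_sub_cancel] at hc
      have hv2' : x (i - 1) (K + 1) / x i (K + 1) = Rarr n m (i - 1) (K + 1) := by
        have h := hvert (i - 1) (K + 1) (by omega) (by omega) (by omega)
        rwa [show i - 1 + 1 = i from by omega] at h
      rw [hv2', hT] at hc
      by_cases hiltn : i < n
      · rw [if_pos hiltn] at hc ⊢
        rw [hvert i (K + 1) (by omega) (by omega) (by omega)] at hc
        linear_combination hc
      · rw [if_neg hiltn] at hc ⊢
        linear_combination hc

theorem stmt7 (n : ℕ) (hn : 2 ≤ n) (m : ℕ → K)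
    (hm : ∀ r, 1 ≤ r → r ≤ n * (n - 1) / 2 → m r ≠ 0)
    (x : ℕ → ℕ → K) (hx : ∀ i j, 1 ≤ j → j ≤ i → i ≤ n → x i j ≠ 0)
    (hvert : ∀ i j, 1 ≤ j → j ≤ i → i ≤ n - 1 → x i j / x (i + 1) j = Rarr n m i j)
    (hcrit : ∀ i j, 1 ≤ j → j < i → i ≤ n → critCond n x i j) :
    ∀ i k, 1 ≤ k → k < i → i ≤ n →
      x (i - 1) k / x i k + (if 2 ≤ k then x i (k - 1) / x i k else 0)
        = m (sIdx n k + (i - k)) := by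
  intro i k hk hki hin
  have hc := hcrit i k hk hki hin
  unfold critCond at hc
  rw [← hc]
  have hJ := mainJ hn m hm x hx hvert hcrit k i hk hki hin
  rw [hJ]
  by_cases hiltn : i < n
  · rw [if_pos hiltn, if_pos hiltn, hvert i k hk (by omega) (by omega)]
    ring
  · rw [if_neg hiltn, if_neg hiltn]
    ring
end
end

section
/- Let d_1,…,d_n ∈ K^× and let x : V → K^× satisfy x((i,i)) = d_i for i = 1,…,n and the critical point conditions at every dot vertex. Then there exists c ∈ K^× such that Ξ_i/Ξ_{i+1} = c for all i = 1,…,n, and moreover c^n = Π_{i=1}^n d_i. -/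
noncomputable section

variable {K : Type*} [Field K]

lemma Xi_ne_zero (n : ℕ) (x : ℕ → ℕ → K)
    (hx : ∀ i j, 1 ≤ j → j ≤ i → i ≤ n → x i j ≠ 0) (i : ℕ) (hi : 1 ≤ i) :
    Xi n x i ≠ 0 := by
  simp only [Xi]
  apply Finset.prod_ne_zero_iff.2
  intro l hl
  simp only [Finset.mem_Icc] at hl
  exact hx (i - 1 + l) l hl.1 (by omega) (by omega)

/-- The key quadratic identity `Ξ₁ Ξ₃ = Ξ₂²`. -/
lemma Xi_sq (N : ℕ) (hN : 3 ≤ N) (x : ℕ → ℕ → K)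
    (hx : ∀ i j, 1 ≤ j → j ≤ i → i ≤ N → x i j ≠ 0)
    (hcrit : ∀ i j, 1 ≤ j → j < i → i ≤ N → critCond N x i j) :
    Xi N x 1 * Xi N x 3 = Xi N x 2 ^ 2 := by
  obtain ⟨t, rfl⟩ : ∃ t, N = t + 3 := ⟨N - 3, by omega⟩
  -- Claim A'
  have claim : ∀ s, s ≤ t →
      (∏ l ∈ Finset.Icc 1 (s + 2), x l l) * (∏ l ∈ Finset.Icc 1 s, x (2 + l) l)
          * x (s + 3) (s + 1)
        = (∏ l ∈ Finset.Icc 1 (s + 1), x (1 + l) l) ^ 2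
          * (x (s + 2) (s + 2) + x (s + 3) (s + 1)) := by
    intro s
    induction s with
    | zero =>
      intro _
      have h := hcrit 2 1 (by omega) (by omega) (by omega)
      rw [critCond, if_pos (by omega), if_neg (by omega)] at h
      norm_num at h
      have h31 : x 3 1 ≠ 0 := hx 3 1 (by omega) (by omega) (by omega)
      have h22 : x 2 2 ≠ 0 := hx 2 2 (by omega) (by omega) (by omega)
      have h21 : x 2 1 ≠ 0 := hx 2 1 (by omega) (by omega) (by omega)
      field_simp at h
      have e1 : (∏ l ∈ Finset.Icc 1 2, x l l) = x 1 1 * x 2 2 := by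
        rw [show (2:ℕ) = 1 + 1 from rfl, Finset.prod_Icc_succ_top (by omega),
          Finset.Icc_self, Finset.prod_singleton]
      have e2 : (∏ l ∈ Finset.Icc 1 0, x (2 + l) l) = 1 := by
        rw [show Finset.Icc 1 0 = ∅ from rfl, Finset.prod_empty]
      have e3 : (∏ l ∈ Finset.Icc 1 1, x (1 + l) l) = x 2 1 := by
        have e := Finset.prod_Icc_succ_top (show (1:ℕ) ≤ 0 + 1 by omega) (fun l => x (1 + l) l)
        simp only [Nat.zero_add] at e ⊢
        rw [e, show Finset.Icc 1 0 = ∅ from rfl, Finset.prod_empty, one_mul]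
      simp only [Nat.zero_add]
      rw [e1, e2, e3]
      linear_combination -h
    | succ s ih =>
      intro hs
      have hA := ih (by omega)
      have h := hcrit (s + 3) (s + 2) (by omega) (by omega) (by omega)
      rw [critCond, if_pos (by omega), if_pos (by omega)] at h
      rw [show s + 3 - 1 = s + 2 from rfl, show s + 2 - 1 = s + 1 from rfl,
        show s + 3 + 1 = s + 4 from rfl, show s + 2 + 1 = s + 3 from rfl] at h
      have hw : x (s + 4) (s + 2) ≠ 0 := hx _ _ (by omega) (by omega) (by omega)
      have hdd : x (s + 3) (s + 3) ≠ 0 := hx _ _ (by omega) (by omega) (by omega)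
      have hv : x (s + 3) (s + 2) ≠ 0 := hx _ _ (by omega) (by omega) (by omega)
      field_simp at h
      simp only [show s + 1 + 2 = s + 3 from by omega, show s + 1 + 3 = s + 4 from by omega,
        show s + 1 + 1 = s + 2 from by omega]
      have d1 : (∏ l ∈ Finset.Icc 1 (s + 3), x l l)
          = (∏ l ∈ Finset.Icc 1 (s + 2), x l l) * x (s + 3) (s + 3) := by
        have e := Finset.prod_Icc_succ_top (show (1:ℕ) ≤ s + 2 + 1 by omega) (fun l => x l l)
        simpa using e
      have d2 : (∏ l ∈ Finset.Icc 1 (s + 1), x (2 + l) l)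
          = (∏ l ∈ Finset.Icc 1 s, x (2 + l) l) * x (s + 3) (s + 1) := by
        have e := Finset.prod_Icc_succ_top (show (1:ℕ) ≤ s + 1 by omega) (fun l => x (2 + l) l)
        rw [e, show 2 + (s + 1) = s + 3 from by omega]
      have d3 : (∏ l ∈ Finset.Icc 1 (s + 2), x (1 + l) l)
          = (∏ l ∈ Finset.Icc 1 (s + 1), x (1 + l) l) * x (s + 3) (s + 2) := by
        have e := Finset.prod_Icc_succ_top (show (1:ℕ) ≤ s + 1 + 1 by omega)
          (fun l => x (1 + l) l)
        rw [show s + 2 = s + 1 + 1 from rfl, e, show 1 + (s + 1 + 1) = s + 3 from by omega]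
      rw [d1, d2, d3]
      linear_combination (x (s + 3) (s + 3) * x (s + 4) (s + 2)) * hA -
        ((∏ l ∈ Finset.Icc 1 (s + 1), x (1 + l) l) ^ 2) * h
  -- final step
  have hAt := claim t le_rfl
  have h := hcrit (t + 3) (t + 2) (by omega) (by omega) (by omega)
  rw [critCond, if_neg (by omega), if_pos (by omega)] at h
  rw [show t + 3 - 1 = t + 2 from rfl, show t + 2 - 1 = t + 1 from rfl,
    show t + 2 + 1 = t + 3 from rfl] at h
  have hdd : x (t + 3) (t + 3) ≠ 0 := hx _ _ (by omega) (by omega) (by omega)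
  have hv : x (t + 3) (t + 2) ≠ 0 := hx _ _ (by omega) (by omega) (by omega)
  field_simp at h
  simp only [Xi]
  rw [show t + 3 + 1 - 1 = t + 3 from by omega, show t + 3 + 1 - 3 = t + 1 from by omega,
    show t + 3 + 1 - 2 = t + 2 from by omega]
  have e1 : (∏ l ∈ Finset.Icc 1 (t + 3), x (1 - 1 + l) l) = ∏ l ∈ Finset.Icc 1 (t + 3), x l l :=
    Finset.prod_congr rfl fun l _ => by rw [show 1 - 1 + l = l from by omega]
  have e3 : (∏ l ∈ Finset.Icc 1 (t + 1), x (3 - 1 + l) l)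
      = ∏ l ∈ Finset.Icc 1 (t + 1), x (2 + l) l :=
    Finset.prod_congr rfl fun l _ => by rw [show 3 - 1 + l = 2 + l from by omega]
  have e2 : (∏ l ∈ Finset.Icc 1 (t + 2), x (2 - 1 + l) l)
      = ∏ l ∈ Finset.Icc 1 (t + 2), x (1 + l) l :=
    Finset.prod_congr rfl fun l _ => by rw [show 2 - 1 + l = 1 + l from by omega]
  rw [e1, e2, e3]
  have d1 : (∏ l ∈ Finset.Icc 1 (t + 3), x l l)
      = (∏ l ∈ Finset.Icc 1 (t + 2), x l l) * x (t + 3) (t + 3) := by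
    have e := Finset.prod_Icc_succ_top (show (1:ℕ) ≤ t + 2 + 1 by omega) (fun l => x l l)
    simpa using e
  have d2 : (∏ l ∈ Finset.Icc 1 (t + 1), x (2 + l) l)
      = (∏ l ∈ Finset.Icc 1 t, x (2 + l) l) * x (t + 3) (t + 1) := by
    have e := Finset.prod_Icc_succ_top (show (1:ℕ) ≤ t + 1 by omega) (fun l => x (2 + l) l)
    rw [e, show 2 + (t + 1) = t + 3 from by omega]
  have d3 : (∏ l ∈ Finset.Icc 1 (t + 2), x (1 + l) l)
      = (∏ l ∈ Finset.Icc 1 (t + 1), x (1 + l) l) * x (t + 3) (t + 2) := by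
    have e := Finset.prod_Icc_succ_top (show (1:ℕ) ≤ t + 1 + 1 by omega) (fun l => x (1 + l) l)
    rw [show t + 2 = t + 1 + 1 from rfl, e, show 1 + (t + 1 + 1) = t + 3 from by omega]
  rw [d1, d2, d3]
  linear_combination (x (t + 3) (t + 3)) * hAt -
    ((∏ l ∈ Finset.Icc 1 (t + 1), x (1 + l) l) ^ 2) * h

lemma key : ∀ n : ℕ, 2 ≤ n → ∀ x : ℕ → ℕ → K,
    (∀ i j, 1 ≤ j → j ≤ i → i ≤ n → x i j ≠ 0) →
    (∀ i j, 1 ≤ j → j < i → i ≤ n → critCond n x i j) →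
    ∃ c : K, c ≠ 0 ∧ ∀ i, 1 ≤ i → i ≤ n → Xi n x i = c * Xi n x (i + 1) := by
  intro n hn
  induction n, hn using Nat.le_induction with
  | base =>
    intro x hx hcrit
    refine ⟨x 2 1, hx 2 1 (by omega) (by omega) (by omega), ?_⟩
    have h := hcrit 2 1 (by omega) (by omega) (by omega)
    rw [critCond, if_neg (by omega), if_neg (by omega)] at h
    norm_num at h
    have h22 : x 2 2 ≠ 0 := hx 2 2 (by omega) (by omega) (by omega)
    have h21 : x 2 1 ≠ 0 := hx 2 1 (by omega) (by omega) (by omega)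
    field_simp at h
    intro i h1 h2
    interval_cases i
    · simp only [Xi]
      norm_num
      rw [show (2:ℕ) = 1 + 1 from rfl, Finset.prod_Icc_succ_top (by omega),
        Finset.Icc_self, Finset.prod_singleton]
      norm_num
      linear_combination -h
    · simp only [Xi]
      norm_num
  | succ n hn ih =>
    intro x hx hcrit
    -- the subquiver on the dots
    have hx' : ∀ i j, 1 ≤ j → j ≤ i → i ≤ n → x (i + 1) j ≠ 0 := by
      intro i j h1 h2 h3; exact hx (i + 1) j h1 (by omega) (by omega)
    have hcrit' : ∀ i j, 1 ≤ j → j < i → i ≤ n →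
        critCond n (fun a b => x (a + 1) b) i j := by
      intro i j h1 h2 h3
      have h := hcrit (i + 1) j h1 (by omega) (by omega)
      rw [critCond] at h ⊢
      simp only [Nat.add_sub_cancel, Nat.add_lt_add_iff_right] at h
      show (if i < n then x (i + 1) j / x (i + 1 + 1) j else 0) + x (i + 1) j / x (i + 1) (j + 1)
        = x (i - 1 + 1) j / x (i + 1) j
          + (if 2 ≤ j then x (i + 1) (j - 1) / x (i + 1) j else 0)
      rw [show i - 1 + 1 = i from by omega]
      exact h
    obtain ⟨c, hc0, hc⟩ := ih (fun a b => x (a + 1) b) hx' hcrit'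
    have hXi : ∀ i, 1 ≤ i → Xi n (fun a b => x (a + 1) b) i = Xi (n + 1) x (i + 1) := by
      intro i hi
      simp only [Xi]
      rw [show n + 1 + 1 - (i + 1) = n + 1 - i from by omega]
      exact Finset.prod_congr rfl fun l _ => by
        show x (i - 1 + l + 1) l = x (i + 1 - 1 + l) l
        rw [show i - 1 + l + 1 = i + 1 - 1 + l from by omega]
    have hc2 : ∀ j, 1 ≤ j → j ≤ n → Xi (n + 1) x (j + 1) = c * Xi (n + 1) x (j + 1 + 1) := by
      intro j h1 h2
      rw [← hXi j h1, ← hXi (j + 1) (by omega)]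
      exact hc j h1 h2
    refine ⟨c, hc0, ?_⟩
    intro i h1 h2
    rcases Nat.lt_or_ge i 2 with hi | hi
    · -- i = 1
      have hi1 : i = 1 := by omega
      subst hi1
      have hsq := Xi_sq (n + 1) (by omega) x hx hcrit
      have h21 : Xi (n + 1) x 2 = c * Xi (n + 1) x 3 := hc2 1 (by omega) (by omega)
      have h3 : Xi (n + 1) x 3 ≠ 0 := Xi_ne_zero (n + 1) x hx _ (by omega)
      show Xi (n + 1) x 1 = c * Xi (n + 1) x 2
      apply mul_right_cancel₀ h3
      linear_combination hsq + Xi (n + 1) x 2 * h21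
    · obtain ⟨j, rfl⟩ : ∃ j, i = j + 1 := ⟨i - 1, by omega⟩
      exact hc2 j (by omega) (by omega)

theorem stmt8 (n : ℕ) (hn : 2 ≤ n)
    (x : ℕ → ℕ → K) (hx : ∀ i j, 1 ≤ j → j ≤ i → i ≤ n → x i j ≠ 0)
    (d : ℕ → K) (hd : ∀ i, 1 ≤ i → i ≤ n → d i ≠ 0)
    (hstar : ∀ i, 1 ≤ i → i ≤ n → x i i = d i)
    (hcrit : ∀ i j, 1 ≤ j → j < i → i ≤ n → critCond n x i j) :
    ∃ c : K, c ≠ 0 ∧ (∀ i, 1 ≤ i → i ≤ n → Xi n x i / Xi n x (i + 1) = c) ∧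
      c ^ n = ∏ i ∈ Finset.Icc 1 n, d i := by
  obtain ⟨c, hc0, hc⟩ := key n hn x hx hcrit
  refine ⟨c, hc0, ?_, ?_⟩
  · intro i h1 h2
    rw [hc i h1 h2]
    exact mul_div_cancel_right₀ c (Xi_ne_zero n x hx (i + 1) (by omega))
  · have hstep : ∀ k, k ≤ n → Xi n x (n + 1 - k) = c ^ k := by
      intro k
      induction k with
      | zero =>
        intro _
        simp only [Xi]
        rw [show n + 1 - (n + 1 - 0) = 0 from by omega]
        rw [show Finset.Icc 1 0 = ∅ from rfl, Finset.prod_empty, pow_zero]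
      | succ k ihk =>
        intro hk
        have e : n + 1 - (k + 1) = n - k := by omega
        rw [e]
        have := hc (n - k) (by omega) (by omega)
        rw [this, show n - k + 1 = n + 1 - k from by omega, ihk (by omega)]
        ring
    have h1 := hstep n le_rfl
    rw [show n + 1 - n = 1 from by omega] at h1
    rw [← h1]
    simp only [Xi]
    rw [show n + 1 - 1 = n from rfl]
    exact Finset.prod_congr rfl fun l hl => by
      simp only [Finset.mem_Icc] at hl
      rw [show 1 - 1 + l = l from by omega]
      exact hstar l hl.1 hl.2
end
end

section
/- Let λ = (λ_1,…,λ_n) ∈ ℝ^n be dominant (λ_1 ≥ λ_2 ≥ … ≥ λ_n) and set ℓ := (1/n)Σ_{i=1}^n λ_i. Let x : V → K_{>0} satisfy x((i,i)) = t^{λ_i} for i = 1,…,n and the critical point conditions at every dot vertex. Then Ξ_i/Ξ_{i+1} = t^ℓ for all i = 1,…,n. -/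
noncomputable section

variable {K : Type*} [Field K]

/-- The field of (generalized) Puiseux series, formalized as Hahn series over `ℝ` with
complex coefficients. -/
abbrev PS : Type := HahnSeries ℝ ℂ

/-- The positive part `K_{>0}`: nonzero series whose lowest-order coefficient is a positive
real number. -/
def PSpos (c : PS) : Prop := c ≠ 0 ∧ ∃ r : ℝ, 0 < r ∧ c.coeff c.order = (r : ℂ)

/-!
At a dot vertex `(i,j)` the critical point condition says
`x(i,j)² · (x(i+1,j) + x(i,j+1)) = x(i+1,j) · x(i,j+1) · (x(i-1,j) + x(i,j-1))`
(terms of absent arrows dropped), and the left-hand sum is the sum over the heads of the arrows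
leaving `(i+1,j+1)`, the next vertex on the same diagonal. Multiplying these identities along the
`(i+1)`-st diagonal the sums telescope, which gives `Ξ_{i+1}² = Ξ_i Ξ_{i+2}`. Hence
`ρ := Ξ_i / Ξ_{i+1}` does not depend on `i`, and `ρⁿ = Ξ_1 / Ξ_{n+1} = t^{λ_1 + ⋯ + λ_n}`.
As `ρ ∈ K_{>0}` and positive series have unique positive `n`-th roots, `ρ = t^ℓ`.
-/

open Finset HahnSeries

section Telescoping

variable {M : Type*} [CommMonoid M]

theorem prod_range_mul_eq_of_mul_succ {a b S : ℕ → M} {N : ℕ}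
    (h : ∀ l < N, a l * S (l + 1) = b l * S l) :
    (∏ l ∈ range N, a l) * S N = (∏ l ∈ range N, b l) * S 0 := by
  induction N with
  | zero => simp
  | succ N ih =>
    calc (∏ l ∈ range (N + 1), a l) * S (N + 1)
        = (∏ l ∈ range N, a l) * (a N * S (N + 1)) := by rw [prod_range_succ, mul_assoc]
      _ = ((∏ l ∈ range N, a l) * S N) * b N := by rw [h N N.lt_succ_self]; ac_rfl
      _ = (∏ l ∈ range (N + 1), b l) * S 0 := by
        rw [ih fun l hl => h l (hl.trans N.lt_succ_self), prod_range_succ]; ac_rfl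

theorem sq_prod_range_eq_of_telescoping {u v w S : ℕ → M} {N : ℕ} (hS : S 0 = w 0)
    (hstep : ∀ l < N, v l ^ 2 * S (l + 1) = u l * w (l + 1) * S l)
    (hlast : v N ^ 2 = w (N + 1) * S N) :
    (∏ l ∈ range (N + 1), v l) ^ 2 = (∏ l ∈ range (N + 2), w l) * ∏ l ∈ range N, u l :=
  calc (∏ l ∈ range (N + 1), v l) ^ 2
      = ((∏ l ∈ range N, v l ^ 2) * S N) * w (N + 1) := by
        rw [prod_range_succ, mul_pow, prod_pow, hlast]; ac_rfl
    _ = ((∏ l ∈ range N, u l * w (l + 1)) * S 0) * w (N + 1) := by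
        rw [prod_range_mul_eq_of_mul_succ hstep]
    _ = (∏ l ∈ range (N + 2), w l) * ∏ l ∈ range N, u l := by
        rw [prod_mul_distrib, prod_range_succ _ (N + 1), prod_range_succ' _ N, hS]; ac_rfl

theorem pow_mul_of_eq_mul_succ {f : ℕ → M} {r : M} {N : ℕ}
    (h : ∀ k < N, f k = r * f (k + 1)) : f 0 = r ^ N * f N := by
  induction N with
  | zero => simp
  | succ N ih =>
    rw [ih fun k hk => h k (hk.trans N.lt_succ_self), h N N.lt_succ_self, pow_succ, mul_assoc]

end Telescoping

theorem eq_div_mul_succ_of_sq_eq_mul {F : Type*} [Field F] {f : ℕ → F} {N : ℕ}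
    (hne : ∀ k < N, f (k + 1) ≠ 0) (hsq : ∀ k, k + 2 ≤ N → f (k + 1) ^ 2 = f k * f (k + 2)) :
    ∀ k < N, f k = f 0 / f 1 * f (k + 1) := by
  intro k hk
  induction k with
  | zero => rw [div_mul_cancel₀ _ (hne 0 hk)]
  | succ k ih =>
    apply mul_left_cancel₀ (hne k (by omega))
    linear_combination hsq k hk + f (k + 2) * ih (by omega)

theorem prod_single_one {ι Γ R : Type*} [AddCommMonoid Γ] [PartialOrder Γ]
    [IsOrderedCancelAddMonoid Γ] [CommSemiring R] (s : Finset ι) (f : ι → Γ) :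
    ∏ i ∈ s, (single (f i) 1 : HahnSeries Γ R) = single (∑ i ∈ s, f i) 1 := by
  induction s using Finset.cons_induction with
  | empty => simp
  | cons i s hi ih => rw [prod_cons, sum_cons, ih, single_mul_single, one_mul]

section Positive

theorem psPos_iff {c : PS} : PSpos c ↔ ∃ r : ℝ, 0 < r ∧ c.leadingCoeff = r := by
  refine ⟨fun ⟨_, h⟩ => by simpa only [leadingCoeff_eq] using h, fun ⟨r, hr, hc⟩ => ⟨?_, ?_⟩⟩
  · rw [← leadingCoeff_ne_zero, hc]
    exact_mod_cast hr.ne'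
  · exact ⟨r, hr, by rwa [← leadingCoeff_eq]⟩

theorem psPos_single (a : ℝ) : PSpos (single a (1 : ℂ)) :=
  psPos_iff.2 ⟨1, one_pos, by simp⟩

theorem psPos_one : PSpos 1 := by
  simpa using psPos_single 0

variable {a b : PS}

theorem PSpos.ne_zero (ha : PSpos a) : a ≠ 0 := ha.1

theorem PSpos.mul (ha : PSpos a) (hb : PSpos b) : PSpos (a * b) := by
  obtain ⟨r, hr, har⟩ := psPos_iff.1 ha
  obtain ⟨s, hs, hbs⟩ := psPos_iff.1 hb
  exact psPos_iff.2 ⟨r * s, mul_pos hr hs, by rw [leadingCoeff_mul, har, hbs]; push_cast; rfl⟩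

theorem PSpos.of_mul_right (hab : PSpos (a * b)) (hb : PSpos b) : PSpos a := by
  obtain ⟨r, hr, habr⟩ := psPos_iff.1 hab
  obtain ⟨s, hs, hbs⟩ := psPos_iff.1 hb
  have hs0 : (s : ℂ) ≠ 0 := by exact_mod_cast hs.ne'
  refine psPos_iff.2 ⟨r / s, div_pos hr hs, ?_⟩
  rw [leadingCoeff_mul, hbs] at habr
  push_cast
  rw [eq_div_iff hs0, habr]

theorem PSpos.div (ha : PSpos a) (hb : PSpos b) : PSpos (a / b) :=
  PSpos.of_mul_right (by rwa [div_mul_cancel₀ _ hb.ne_zero]) hb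

theorem PSpos.pow (ha : PSpos a) (n : ℕ) : PSpos (a ^ n) := by
  induction n with
  | zero => simpa using psPos_one
  | succ n ih => rw [pow_succ]; exact ih.mul ha

theorem PSpos.add_of_order_eq (ha : PSpos a) (hb : PSpos b) (hab : a.order = b.order) :
    PSpos (a + b) := by
  obtain ⟨r, hr, har⟩ := ha.2
  obtain ⟨s, hs, hbs⟩ := hb.2
  have hsum : (a + b).coeff a.order = ((r + s : ℝ) : ℂ) := by
    rw [coeff_add, har, hab, hbs]; push_cast; rfl
  have hsum0 : (a + b).coeff a.order ≠ 0 := by rw [hsum]; exact_mod_cast (add_pos hr hs).ne'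
  have hne : a + b ≠ 0 := ne_zero_of_coeff_ne_zero hsum0
  have horder : (a + b).order = a.order :=
    (order_le_of_coeff_ne_zero hsum0).antisymm
      (by simpa [← hab] using min_order_le_order_add hne)
  exact ⟨hne, r + s, add_pos hr hs, by rw [horder, hsum]⟩

theorem PSpos.add (ha : PSpos a) (hb : PSpos b) : PSpos (a + b) := by
  rcases lt_trichotomy a.orderTop b.orderTop with h | h | h
  · exact psPos_iff.2 (leadingCoeff_add_eq_left h ▸ psPos_iff.1 ha)
  · refine ha.add_of_order_eq hb ?_
    rwa [← WithTop.coe_eq_coe, order_eq_orderTop_of_ne_zero ha.ne_zero,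
      order_eq_orderTop_of_ne_zero hb.ne_zero]
  · exact psPos_iff.2 (leadingCoeff_add_eq_right h ▸ psPos_iff.1 hb)

theorem PSpos.eq_of_pow_eq (ha : PSpos a) (hb : PSpos b) {n : ℕ} (hn : n ≠ 0)
    (h : a ^ n = b ^ n) : a = b := by
  have hgeom : PSpos (∑ k ∈ range n, a ^ k * b ^ (n - 1 - k)) :=
    sum_induction_nonempty _ PSpos (fun _ _ => PSpos.add) (nonempty_range_iff.2 hn)
      fun k _ => (ha.pow k).mul (hb.pow _)
  have := geom_sum₂_mul a b n
  rw [h, sub_self] at this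
  exact sub_eq_zero.1 ((mul_eq_zero.1 this).resolve_left hgeom.ne_zero)

end Positive

section Quiver

variable {n : ℕ} {x : ℕ → ℕ → K}

/-- The sum of `x` over the heads of the arrows leaving `(i,j)`. -/
def outSum (x : ℕ → ℕ → K) (i j : ℕ) : K :=
  x (i - 1) j + if 2 ≤ j then x i (j - 1) else 0

theorem critCond.sq_mul_outSum_succ {i j : ℕ} (h : critCond n x i j) (hj : 1 ≤ j) (hi : i < n)
    (hv : x i j ≠ 0) (hu : x (i + 1) j ≠ 0) (hw : x i (j + 1) ≠ 0) :
    x i j ^ 2 * outSum x (i + 1) (j + 1) = x (i + 1) j * x i (j + 1) * outSum x i j := by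
  unfold critCond at h
  rw [if_pos hi] at h
  simp only [outSum, Nat.add_sub_cancel, if_pos (by omega : 2 ≤ j + 1)]
  by_cases hj2 : 2 ≤ j <;> simp only [hj2, if_true, if_false] at h ⊢ <;> field_simp at h <;>
    linear_combination h

theorem critCond.sq_eq_mul_outSum {j : ℕ} (h : critCond n x n j) (hv : x n j ≠ 0)
    (hw : x n (j + 1) ≠ 0) : x n j ^ 2 = x n (j + 1) * outSum x n j := by
  unfold critCond at h
  rw [if_neg (lt_irrefl n), zero_add] at h
  unfold outSum
  by_cases hj2 : 2 ≤ j <;> simp only [hj2, if_true, if_false] at h ⊢ <;> field_simp at h <;>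
    linear_combination h

theorem Xi_eq_prod_range {i : ℕ} (hi : 1 ≤ i) :
    Xi n x i = ∏ l ∈ range (n + 1 - i), x (i + l) (l + 1) := by
  rw [Xi, ← Ico_add_one_right_eq_Icc, prod_Ico_eq_prod_range]
  exact prod_congr rfl fun l _ => by
    rw [show i - 1 + (1 + l) = i + l by omega, add_comm 1 l]

theorem Xi_succ_self : Xi n x (n + 1) = 1 := by
  simp [Xi]

theorem Xi_one_of_diag {c : ℕ → K} (hdiag : ∀ i, 1 ≤ i → i ≤ n → x i i = c i) :
    Xi n x 1 = ∏ i ∈ Icc 1 n, c i := by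
  rw [Xi, Nat.add_sub_cancel]
  exact prod_congr rfl fun l hl => by
    rw [Nat.sub_self, zero_add, hdiag l (mem_Icc.1 hl).1 (mem_Icc.1 hl).2]

theorem sq_Xi_eq_mul (hx : ∀ i j, 1 ≤ j → j ≤ i → i ≤ n → x i j ≠ 0)
    (hcrit : ∀ i j, 1 ≤ j → j < i → i ≤ n → critCond n x i j) {d : ℕ} (hd : d + 2 ≤ n) :
    Xi n x (d + 2) ^ 2 = Xi n x (d + 1) * Xi n x (d + 3) := by
  obtain ⟨N, rfl⟩ : ∃ N, n = d + 2 + N := ⟨n - (d + 2), by omega⟩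
  rw [Xi_eq_prod_range (by omega), Xi_eq_prod_range (by omega), Xi_eq_prod_range (by omega),
    show d + 2 + N + 1 - (d + 2) = N + 1 by omega, show d + 2 + N + 1 - (d + 1) = N + 2 by omega,
    show d + 2 + N + 1 - (d + 3) = N by omega]
  refine sq_prod_range_eq_of_telescoping (S := fun l => outSum x (d + 2 + l) (l + 1))
    (by simp [outSum]) (fun l hl => ?_) ?_
  · have h := (hcrit (d + 2 + l) (l + 1) (by omega) (by omega) (by omega)).sq_mul_outSum_succ
      (by omega) (by omega) (hx _ _ (by omega) (by omega) (by omega))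
      (hx _ _ (by omega) (by omega) (by omega)) (hx _ _ (by omega) (by omega) (by omega))
    rwa [show d + 3 + l = d + 2 + l + 1 by omega, show d + 1 + (l + 1) = d + 2 + l by omega]
  · have h := (hcrit (d + 2 + N) (N + 1) (by omega) (by omega) le_rfl).sq_eq_mul_outSum
      (hx _ _ (by omega) (by omega) le_rfl) (hx _ _ (by omega) (by omega) le_rfl)
    rwa [show d + 1 + (N + 1) = d + 2 + N by omega]

end Quiver

theorem Xi_pos {n i : ℕ} {x : ℕ → ℕ → PS}
    (hx : ∀ i j, 1 ≤ j → j ≤ i → i ≤ n → PSpos (x i j)) (hi : 1 ≤ i) : PSpos (Xi n x i) := by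
  rw [Xi_eq_prod_range hi]
  exact prod_induction _ PSpos (fun _ _ => PSpos.mul) psPos_one
    fun l hl => hx _ _ (by omega) (by omega) (by have := mem_range.1 hl; omega)

theorem stmt9_general (n : ℕ) (hn : 2 ≤ n) (lam : ℕ → ℝ)
    (ell : ℝ) (hell : ell = (∑ i ∈ Finset.Icc 1 n, lam i) / n)
    (x : ℕ → ℕ → PS) (hx : ∀ i j, 1 ≤ j → j ≤ i → i ≤ n → PSpos (x i j))
    (hstar : ∀ i, 1 ≤ i → i ≤ n → x i i = HahnSeries.single (lam i) 1)
    (hcrit : ∀ i j, 1 ≤ j → j < i → i ≤ n → critCond n x i j) :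
    ∀ i, 1 ≤ i → i ≤ n → Xi n x i / Xi n x (i + 1) = HahnSeries.single ell 1 := by
  have hx0 : ∀ i j, 1 ≤ j → j ≤ i → i ≤ n → x i j ≠ 0 :=
    fun i j h1 h2 h3 => (hx i j h1 h2 h3).ne_zero
  have hratio : ∀ k < n, Xi n x (k + 1) = Xi n x 1 / Xi n x 2 * Xi n x (k + 2) :=
    eq_div_mul_succ_of_sq_eq_mul (f := fun k => Xi n x (k + 1))
      (fun _ _ => (Xi_pos hx (by omega)).ne_zero) fun _ hd => sq_Xi_eq_mul hx0 hcrit hd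
  have hρ : Xi n x 1 / Xi n x 2 = single ell 1 := by
    refine PSpos.eq_of_pow_eq ((Xi_pos hx le_rfl).div (Xi_pos hx (by omega))) (psPos_single ell)
      (by omega : n ≠ 0) ?_
    have h : Xi n x 1 = (Xi n x 1 / Xi n x 2) ^ n * Xi n x (n + 1) :=
      pow_mul_of_eq_mul_succ (f := fun k => Xi n x (k + 1)) hratio
    rw [Xi_succ_self, mul_one] at h
    rw [← h, Xi_one_of_diag hstar, prod_single_one, single_pow, one_pow, hell, nsmul_eq_mul]
    field_simp
  intro i hi hin
  obtain ⟨k, rfl⟩ : ∃ k, i = k + 1 := ⟨i - 1, by omega⟩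
  rw [hratio k (by omega), mul_div_assoc, div_self (Xi_pos hx (by omega)).ne_zero, mul_one, hρ]

theorem stmt9 (n : ℕ) (hn : 2 ≤ n) (lam : ℕ → ℝ)
    (hdom : ∀ i, 1 ≤ i → i + 1 ≤ n → lam (i + 1) ≤ lam i)
    (ell : ℝ) (hell : ell = (∑ i ∈ Finset.Icc 1 n, lam i) / n)
    (x : ℕ → ℕ → PS) (hx : ∀ i j, 1 ≤ j → j ≤ i → i ≤ n → PSpos (x i j))
    (hstar : ∀ i, 1 ≤ i → i ≤ n → x i i = HahnSeries.single (lam i) 1)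
    (hcrit : ∀ i j, 1 ≤ j → j < i → i ≤ n → critCond n x i j) :
    ∀ i, 1 ≤ i → i ≤ n → Xi n x i / Xi n x (i + 1) = HahnSeries.single ell 1 :=
  stmt9_general n hn lam ell hell x hx hstar hcrit
end
end

section
/- Let δ : V → ℝ satisfy the tropical critical point conditions at every dot vertex. Then for all 1 ≤ a < b ≤ n with b − a ≥ 2, π((b,a)) = max{π((b,a+1)), π((b−1,a))}; equivalently, the filling n_{ab} := π((b,a)) (for 1 ≤ a < b ≤ n) satisfies the defining max-relations of an ideal filling. -/
noncomputable section

/-- The tropical critical point condition of the GL_n quiver at a dot vertex `(i,j)`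
(so `1 ≤ j < i ≤ n`), for a decoration `δ` of the vertices by real numbers: the minimum of
the tropical values `δ(head) - δ(tail)` over the arrows with head `(i,j)` equals the
corresponding minimum over the arrows with tail `(i,j)`.  The incoming arrows are the vertical
one from `(i+1,j)` (present iff `i < n`) and the horizontal one from `(i,j+1)`; the outgoing
arrows are the vertical one to `(i-1,j)` and the horizontal one to `(i,j-1)`
(present iff `2 ≤ j`). -/
def tropCond (n : ℕ) (δ : ℕ → ℕ → ℝ) (i j : ℕ) : Prop :=
  (if i < n then min (δ i j - δ (i + 1) j) (δ i j - δ i (j + 1)) else δ i j - δ i (j + 1))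
    = if 2 ≤ j then min (δ (i - 1) j - δ i j) (δ i (j - 1) - δ i j) else δ (i - 1) j - δ i j

/-- `π((i,j))`: the minimum of the tropical values of the arrows with tail the dot vertex
`(i,j)`; when the tropical critical point condition holds at `(i,j)` this is the common
minimum over incoming resp. outgoing arrows. -/
def piFn (δ : ℕ → ℕ → ℝ) (i j : ℕ) : ℝ :=
  if 2 ≤ j then min (δ (i - 1) j - δ i j) (δ i (j - 1) - δ i j) else δ (i - 1) j - δ i j

lemma piFn_le_out_vert (δ : ℕ → ℕ → ℝ) (i j : ℕ) : piFn δ i j ≤ δ (i - 1) j - δ i j := by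
  unfold piFn
  split
  · exact min_le_left _ _
  · exact le_rfl

lemma pi_in_eq (n : ℕ) (δ : ℕ → ℕ → ℝ)
    (hcrit : ∀ i j, 1 ≤ j → j < i → i ≤ n → tropCond n δ i j)
    (i j : ℕ) (h1 : 1 ≤ j) (h2 : j < i) (h3 : i ≤ n) :
    piFn δ i j = if i < n then min (δ i j - δ (i + 1) j) (δ i j - δ i (j + 1))
      else δ i j - δ i (j + 1) := by
  have h := hcrit i j h1 h2 h3
  unfold tropCond at h
  unfold piFn
  exact h.symm

/-- Monotonicity of `π` toward the diagonal, proved by joint induction: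
horizontal step `π(i,j+1) ≤ π(i,j)` and vertical step `π(i,j+1) ≤ π(i+1,j+1)`. -/
lemma key_s10 (n : ℕ) (δ : ℕ → ℕ → ℝ)
    (hcrit : ∀ i j, 1 ≤ j → j < i → i ≤ n → tropCond n δ i j) :
    ∀ k i j, n - i + j ≤ k → 1 ≤ j → j + 2 ≤ i → i ≤ n →
      piFn δ i (j + 1) ≤ piFn δ i j ∧
        (i < n → piFn δ i (j + 1) ≤ piFn δ (i + 1) (j + 1)) := by
  intro k
  induction k with
  | zero => intro i j hk h1 h2 h3; omega
  | succ k ih =>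
    intro i j hk h1 h2 h3
    have hio : piFn δ i (j + 1)
        = min (δ (i - 1) (j + 1) - δ i (j + 1)) (δ i j - δ i (j + 1)) := by
      unfold piFn
      rw [if_pos (by omega : 2 ≤ j + 1)]
      simp
    have hph : piFn δ i (j + 1) ≤ δ i j - δ i (j + 1) := by
      rw [hio]; exact min_le_right _ _
    by_cases hin : i < n
    case neg =>
      have hij : piFn δ i j = δ i j - δ i (j + 1) := by
        rw [pi_in_eq n δ hcrit i j h1 (by omega) h3, if_neg hin]
      exact ⟨by rw [hij]; exact hph, fun h => absurd h hin⟩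
    case pos =>
      have hpx : piFn δ i (j + 1) ≤ δ i (j + 1) - δ (i + 1) (j + 1) := by
        rw [pi_in_eq n δ hcrit i (j + 1) (by omega) (by omega) h3, if_pos hin]
        exact min_le_left _ _
      have hid : (δ i j - δ i (j + 1)) + (δ i (j + 1) - δ (i + 1) (j + 1))
          = (δ i j - δ (i + 1) j) + (δ (i + 1) j - δ (i + 1) (j + 1)) := by ring
      have h7 : piFn δ (i + 1) (j + 1)
          = min (δ i (j + 1) - δ (i + 1) (j + 1)) (δ (i + 1) j - δ (i + 1) (j + 1)) := by
        unfold piFn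
        rw [if_pos (by omega : 2 ≤ j + 1)]
        simp
      -- Step 1: p ≤ V(i+1,j)
      have hpv : piFn δ i (j + 1) ≤ δ i j - δ (i + 1) j := by
        by_contra hc
        push_neg at hc
        have h5 : piFn δ (i + 1) j ≤ δ i j - δ (i + 1) j := by
          have := piFn_le_out_vert δ (i + 1) j
          simpa using this
        have h6 := (ih (i + 1) j (by omega) h1 (by omega) (by omega)).1
        rw [h7] at h6
        rcases min_cases (δ i (j + 1) - δ (i + 1) (j + 1)) (δ (i + 1) j - δ (i + 1) (j + 1))
          with ⟨he, _⟩ | ⟨he, _⟩ <;> rw [he] at h6 <;> linarith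
      have part1 : piFn δ i (j + 1) ≤ piFn δ i j := by
        rw [pi_in_eq n δ hcrit i j h1 (by omega) h3, if_pos hin]
        exact le_min hpv hph
      refine ⟨part1, fun _ => ?_⟩
      -- vertical monotonicity M_v(i+1,j): π(i,j) ≤ π(i+1,j)
      have hmv : piFn δ i j ≤ piFn δ (i + 1) j := by
        rcases Nat.lt_or_ge j 2 with hj1 | hj2
        · have hj : j = 1 := by omega
          subst hj
          have hone : piFn δ (i + 1) 1 = δ i 1 - δ (i + 1) 1 := by
            unfold piFn
            rw [if_neg (by omega : ¬ 2 ≤ 1)]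
            simp
          rw [hone, pi_in_eq n δ hcrit i 1 le_rfl (by omega) h3, if_pos hin]
          exact min_le_left _ _
        · obtain ⟨m, rfl⟩ : ∃ m, j = m + 1 := ⟨j - 1, by omega⟩
          exact (ih i m (by omega) (by omega) (by omega) h3).2 hin
      have hz : piFn δ (i + 1) j ≤ δ (i + 1) j - δ (i + 1) (j + 1) := by
        rw [pi_in_eq n δ hcrit (i + 1) j h1 (by omega) (by omega)]
        split
        · exact min_le_right _ _
        · exact le_rfl
      rw [h7]
      exact le_min hpx (le_trans part1 (le_trans hmv hz))

theorem stmt10 (n : ℕ) (hn : 2 ≤ n) (δ : ℕ → ℕ → ℝ)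
    (hcrit : ∀ i j, 1 ≤ j → j < i → i ≤ n → tropCond n δ i j) :
    ∀ a b, 1 ≤ a → a < b → b ≤ n → 2 ≤ b - a →
      piFn δ b a = max (piFn δ b (a + 1)) (piFn δ (b - 1) a) := by
  intro a b ha hab hbn hba
  obtain ⟨c, rfl⟩ : ∃ c, b = c + 1 := ⟨b - 1, by omega⟩
  simp only [Nat.add_sub_cancel]
  have hac : a + 1 ≤ c := by omega
  have hP_h : piFn δ (c + 1) a ≤ δ (c + 1) a - δ (c + 1) (a + 1) := by
    rw [pi_in_eq n δ hcrit (c + 1) a ha (by omega) hbn]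
    split
    · exact min_le_right _ _
    · exact le_rfl
  have hP_y : piFn δ (c + 1) a ≤ δ c a - δ (c + 1) a := by
    have := piFn_le_out_vert δ (c + 1) a
    simpa using this
  have hA : piFn δ (c + 1) (a + 1)
      = min (δ c (a + 1) - δ (c + 1) (a + 1)) (δ (c + 1) a - δ (c + 1) (a + 1)) := by
    unfold piFn
    rw [if_pos (by omega : 2 ≤ a + 1)]
    simp
  have hB : piFn δ c a = min (δ c a - δ (c + 1) a) (δ c a - δ c (a + 1)) := by
    rw [pi_in_eq n δ hcrit c a ha (by omega) (by omega), if_pos (by omega : c < n)]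
  have hAle : piFn δ (c + 1) (a + 1) ≤ piFn δ (c + 1) a :=
    (key_s10 n δ hcrit (n - (c + 1) + a) (c + 1) a le_rfl ha (by omega) hbn).1
  have hBle : piFn δ c a ≤ piFn δ (c + 1) a := by
    rcases Nat.lt_or_ge a 2 with ha1 | ha2
    · have h1 : a = 1 := by omega
      subst h1
      have hone : piFn δ (c + 1) 1 = δ c 1 - δ (c + 1) 1 := by
        unfold piFn
        rw [if_neg (by omega : ¬ 2 ≤ 1)]
        simp
      rw [hone, pi_in_eq n δ hcrit c 1 le_rfl (by omega) (by omega),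
        if_pos (by omega : c < n)]
      exact min_le_left _ _
    · obtain ⟨m, rfl⟩ : ∃ m, a = m + 1 := ⟨a - 1, by omega⟩
      exact (key_s10 n δ hcrit (n - c + m) c m le_rfl (by omega) (by omega) (by omega)).2
        (by omega)
  have hge : piFn δ (c + 1) a ≤ max (piFn δ (c + 1) (a + 1)) (piFn δ c a) := by
    by_cases hx : piFn δ (c + 1) a ≤ δ c (a + 1) - δ (c + 1) (a + 1)
    · exact le_max_of_le_left (by rw [hA]; exact le_min hx hP_h)
    · push_neg at hx
      have hzge : piFn δ (c + 1) a ≤ δ c a - δ c (a + 1) := by linarith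
      exact le_max_of_le_right (by rw [hB]; exact le_min hP_y hzge)
  exact le_antisymm hge (max_le hAle hBle)
end
end

section
/- Let ℓ ∈ ℝ and let δ : V → ℝ satisfy the tropical critical point conditions at every dot vertex, together with δ((n,1)) = ℓ. Then for every vertex (i,j) ∈ V, δ((i,j)) = Σ_{k=i+1}^{n} π((k,j)) − Σ_{k=1}^{j−1} π((i,k)) + ℓ (the first sum runs over the dot vertices directly below (i,j), the second over the dot vertices directly to its left). -/
noncomputable section

private lemma sum_Icc_bot (f : ℕ → ℝ) {a b : ℕ} (h : a ≤ b) :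
    ∑ k ∈ Finset.Icc a b, f k = f a + ∑ k ∈ Finset.Icc (a + 1) b, f k := by
  have he : Finset.Icc a b = insert a (Finset.Icc (a + 1) b) := by
    ext k; simp only [Finset.mem_Icc, Finset.mem_insert]; omega
  rw [he, Finset.sum_insert (by simp)]

theorem stmt11 (n : ℕ) (hn : 2 ≤ n) (ell : ℝ) (δ : ℕ → ℕ → ℝ)
    (hcrit : ∀ i j, 1 ≤ j → j < i → i ≤ n → tropCond n δ i j)
    (hbase : δ n 1 = ell) :
    ∀ i j, 1 ≤ j → j ≤ i → i ≤ n →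
      δ i j = (∑ k ∈ Finset.Icc (i + 1) n, piFn δ k j)
        - (∑ k ∈ Finset.Icc 1 (j - 1), piFn δ i k) + ell := by
  suffices H : ∀ m i j, n - i + j ≤ m → 1 ≤ j → j ≤ i → i ≤ n →
      δ i j = (∑ k ∈ Finset.Icc (i + 1) n, piFn δ k j)
        - (∑ k ∈ Finset.Icc 1 (j - 1), piFn δ i k) + ell by
    intro i j h1 h2 h3; exact H (n - i + j) i j le_rfl h1 h2 h3
  intro m
  induction m with
  | zero => intro i j hm h1 _ _; exact absurd hm (by omega)
  | succ m ih =>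
    intro i j hm h1 h2 h3
    rcases Nat.lt_or_ge j 2 with hj | hj
    · -- j = 1
      have hj1 : j = 1 := by omega
      subst hj1
      have hempty : Finset.Icc 1 (1 - 1) = (∅ : Finset ℕ) := by decide
      rcases eq_or_lt_of_le h3 with hin | hin
      · subst hin
        have h2' : Finset.Icc (i + 1) i = (∅ : Finset ℕ) := Finset.Icc_eq_empty (by omega)
        rw [hempty, h2', Finset.sum_empty, Finset.sum_empty, hbase]; ring
      · have hB := ih (i + 1) 1 (by omega) le_rfl (by omega) (by omega)
        have hp : piFn δ (i + 1) 1 = δ i 1 - δ (i + 1) 1 := by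
          rw [piFn, if_neg (by omega)]
          simp [Nat.add_sub_cancel]
        rw [hempty, Finset.sum_empty] at hB ⊢
        rw [sum_Icc_bot _ (by omega : i + 1 ≤ n)]
        rw [hp]
        linarith
    · -- j ≥ 2
      obtain ⟨t, rfl⟩ : ∃ t, j = t + 2 := ⟨j - 2, by omega⟩
      have hs1 : t + 2 - 1 = t + 1 := by omega
      have hs2 : t + 1 - 1 = t := by omega
      have hs3 : t + 1 + 1 = t + 2 := by omega
      rcases eq_or_lt_of_le h3 with hin | hin
      · -- i = n
        subst hin
        have hIH := ih i (t + 1) (by omega) (by omega) (by omega) le_rfl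
        have hc := hcrit i (t + 1) (by omega) (by omega) le_rfl
        rw [tropCond, if_neg (lt_irrefl i), hs3] at hc
        have hc' : δ i (t + 1) - δ i (t + 2) = piFn δ i (t + 1) := by rw [piFn]; exact hc
        have hempty : Finset.Icc (i + 1) i = (∅ : Finset ℕ) := Finset.Icc_eq_empty (by omega)
        rw [hs2, hempty, Finset.sum_empty] at hIH
        rw [hs1, hempty, Finset.sum_empty,
          Finset.sum_Icc_succ_top (by omega : 1 ≤ t + 1)]
        linarith
      · -- main case: i < n, j ≥ 2
        have hA := ih (i + 1) (t + 1) (by omega) (by omega) (by omega) (by omega)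
        have hB := ih (i + 1) (t + 2) (by omega) (by omega) (by omega) (by omega)
        have ha := ih i (t + 1) (by omega) (by omega) (by omega) (by omega)
        rw [hs2] at hA
        rw [hs1] at hB
        rw [hs2] at ha
        have hc := hcrit i (t + 1) (by omega) (by omega) (by omega)
        rw [tropCond, if_pos hin, hs3] at hc
        have hc' : min (δ i (t + 1) - δ (i + 1) (t + 1)) (δ i (t + 1) - δ i (t + 2))
            = piFn δ i (t + 1) := by rw [piFn]; exact hc
        have hp : piFn δ (i + 1) (t + 2)
            = min (δ i (t + 2) - δ (i + 1) (t + 2)) (δ (i + 1) (t + 1) - δ (i + 1) (t + 2)) := by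
          rw [piFn, if_pos (by omega)]
          rw [Nat.add_sub_cancel, hs1]
        -- split the sums
        rw [hs1, sum_Icc_bot (fun k => piFn δ k (t + 2)) (by omega : i + 1 ≤ n),
          Finset.sum_Icc_succ_top (by omega : 1 ≤ t + 1)]
        rw [sum_Icc_bot (fun k => piFn δ k (t + 1)) (by omega : i + 1 ≤ n)] at ha
        rw [Finset.sum_Icc_succ_top (by omega : 1 ≤ t + 1)] at hB
        rw [hp]
        rcases le_total (δ i (t + 2)) (δ (i + 1) (t + 1)) with h | h
        · rw [min_eq_left (by linarith)]
          rw [min_eq_left (by linarith)] at hc'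
          linarith
        · rw [min_eq_right (by linarith)]
          rw [min_eq_right (by linarith)] at hc'
          linarith

end
end

section
/- Let λ ∈ ℝ^n be dominant and ℓ := (1/n)Σ_{i=1}^n λ_i. Let S be the set of maps δ : V → ℝ such that δ((k,k)) = λ_k for all k and the tropical critical point conditions hold at every dot vertex, and let F be the set of ideal fillings for λ. For a filling {n_{ij}} and 1 ≤ i ≤ j ≤ n put H^h_{ij} := Σ_{l=j+1}^{n} n_{il} and H^v_{ij} := Σ_{l=1}^{i−1} n_{lj}. Then the map Φ : S → F defined by Φ(δ)_{ij} := π_δ((j,i)) for 1 ≤ i < j ≤ n, and the map Ψ : F → S defined by Ψ({n_{ij}})((j,i)) := H^h_{ij} − H^v_{ij} + ℓ for 1 ≤ i ≤ j ≤ n, are well-defined and mutually inverse bijections. In particular, for each dominant λ the ideal filling for λ exists and is unique. -/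
noncomputable section

/-- The set `S`: decorations `δ` of the quiver vertices with `δ((k,k)) = λ_k` at the star
vertices and satisfying the tropical critical point conditions at every dot vertex. -/
def SPred (n : ℕ) (lam : ℕ → ℝ) (δ : ℕ → ℕ → ℝ) : Prop :=
  (∀ k, 1 ≤ k → k ≤ n → δ k k = lam k) ∧
    ∀ i j, 1 ≤ j → j < i → i ≤ n → tropCond n δ i j

/-- The set `F`: ideal fillings for `λ` (with `ℓ = (1/n) Σ λ_i`). -/
def FPred (n : ℕ) (lam : ℕ → ℝ) (ell : ℝ) (f : ℕ → ℕ → ℝ) : Prop :=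
  (∀ i j, 1 ≤ i → i < j → j ≤ n → 0 ≤ f i j) ∧
  (∀ i j, 1 ≤ i → i < j → j ≤ n → 2 ≤ j - i → f i j = max (f (i + 1) j) (f i (j - 1))) ∧
  (∀ k, 1 ≤ k → k ≤ n →
    (∑ j ∈ Finset.Icc (k + 1) n, f k j) - (∑ i ∈ Finset.Icc 1 (k - 1), f i k) + ell = lam k)

/-- The map `Φ : S → F`, `Φ(δ)_{ij} := π_δ((j,i))`. -/
def PhiMap (δ : ℕ → ℕ → ℝ) : ℕ → ℕ → ℝ := fun i j => piFn δ j i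

/-- The map `Ψ : F → S`, `Ψ({n_{ij}})((j,i)) := H^h_{ij} - H^v_{ij} + ℓ`, written at the
vertex with row index `a` and column index `b`. -/
def PsiMap (n : ℕ) (ell : ℝ) (f : ℕ → ℕ → ℝ) : ℕ → ℕ → ℝ :=
  fun a b => (∑ l ∈ Finset.Icc (a + 1) n, f b l) - (∑ l ∈ Finset.Icc 1 (b - 1), f l a) + ell

/-!
An ideal filling satisfies `n_{ij} = max_{i ≤ k < j} n_{k,k+1}`, hence `n_{ac} = max n_{ab} n_{bc}`
for `a < b < c`. For `δ = Ψ(n)` the two arrows into a dot vertex `(i, j)` then carry `n_{ji}` plus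
two nonnegative gaps, one of which vanishes, and the two arrows out of it carry `n_{ji}` plus the
gaps at `(i - 1, j - 1)`; so `Ψ(n) ∈ S` and `Φ(Ψ(n)) = n`.

Two elements `δ, δ'` of `S` coincide: at a vertex where `δ - δ'` is maximal and positive, with
`i + j` minimal, the arrows into it are no smaller for `δ` than for `δ'` and the arrows out of it
strictly smaller, contradicting the tropical critical point condition.

An ideal filling exists for dominant `λ`: split `[1, n]` at a point `m` maximising `splitSlope`,
give the block `i ≤ m < j` that constant value and recurse on `[1, m]` and `[m + 1, n]`. Hence
`S = {Ψ(n₀)}` and `F = {n₀}`, from which all the claims follow.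
-/

open Finset

theorem sum_Icc_eq_sum_Icc_add_sum_Icc {M : Type*} [AddCommMonoid M] (g : ℕ → M) {a b c : ℕ}
    (hab : a ≤ b + 1) (hbc : b ≤ c) :
    ∑ l ∈ Icc a c, g l = ∑ l ∈ Icc a b, g l + ∑ l ∈ Icc (b + 1) c, g l := by
  rw [← sum_union (disjoint_left.2 fun x hx hx' => by simp only [mem_Icc] at hx hx'; omega)]
  exact sum_congr (by ext x; simp only [mem_Icc, mem_union]; omega) fun _ _ => rfl

theorem sum_Icc_eq_add_sum_Icc {M : Type*} [AddCommMonoid M] (g : ℕ → M) {a b : ℕ}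
    (hab : a ≤ b) :
    ∑ l ∈ Icc a b, g l = g a + ∑ l ∈ Icc (a + 1) b, g l := by
  rw [sum_Icc_eq_sum_Icc_add_sum_Icc g le_self_add hab, Icc_self, sum_singleton]

theorem sum_Icc_const (c : ℝ) {a b : ℕ} (hab : a ≤ b + 1) :
    ∑ _l ∈ Icc a b, c = ((b : ℝ) - a + 1) * c := by
  rw [sum_const, Nat.card_Icc, nsmul_eq_mul, Nat.cast_sub hab]
  push_cast
  ring

theorem antitoneOn_Icc_of_succ_le {α : Type*} [Preorder α] {g : ℕ → α} {a b : ℕ}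
    (h : ∀ i, a ≤ i → i + 1 ≤ b → g (i + 1) ≤ g i) : AntitoneOn g (Set.Icc a b) := by
  intro x hx y hy hxy
  induction y, hxy using Nat.le_induction with
  | base => exact le_rfl
  | succ y hxy ih =>
    exact (h y (hx.1.trans hxy) hy.2).trans (ih ⟨hx.1.trans hxy, (Nat.le_succ y).trans hy.2⟩)

def IsMaxRecOn (p q : ℕ) (f : ℕ → ℕ → ℝ) : Prop :=
  ∀ i j, p ≤ i → i < j → j ≤ q → 2 ≤ j - i → f i j = max (f (i + 1) j) (f i (j - 1))

namespace IsMaxRecOn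

variable {p q : ℕ} {f : ℕ → ℕ → ℝ}

theorem eq_sup' (hf : IsMaxRecOn p q f) {i j : ℕ} (hpi : p ≤ i) (hij : i < j) (hjq : j ≤ q) :
    f i j = (Ico i j).sup' (nonempty_Ico.2 hij) fun k => f k (k + 1) := by
  induction hd : j - i using Nat.strong_induction_on generalizing i j with
  | _ d ih =>
    rcases (by omega : j = i + 1 ∨ 2 ≤ j - i) with rfl | h2
    · simp
    rw [hf i j hpi hij hjq h2, ih (j - (i + 1)) (by omega) (by omega) (by omega) hjq rfl,
      ih (j - 1 - i) (by omega) hpi (by omega) (by omega) rfl, ← sup'_union]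
    exact sup'_congr _ (by ext k; simp only [mem_union, mem_Ico]; omega) fun _ _ => rfl

theorem eq_max (hf : IsMaxRecOn p q f) {a b c : ℕ} (hpa : p ≤ a) (hab : a < b) (hbc : b < c)
    (hcq : c ≤ q) : f a c = max (f a b) (f b c) := by
  rw [hf.eq_sup' hpa (hab.trans hbc) hcq, hf.eq_sup' hpa hab (by omega),
    hf.eq_sup' (by omega) hbc hcq, ← sup'_union]
  exact sup'_congr _ (Ico_union_Ico_eq_Ico hab.le hbc.le).symm fun _ _ => rfl

theorem le_of_subinterval (hf : IsMaxRecOn p q f) {i j i' j' : ℕ} (hpi : p ≤ i) (hii' : i ≤ i')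
    (hij' : i' < j') (hjj' : j' ≤ j) (hjq : j ≤ q) : f i' j' ≤ f i j := by
  rw [hf.eq_sup' (hpi.trans hii') hij' (hjj'.trans hjq), hf.eq_sup' hpi (by omega) hjq]
  exact sup'_mono _ (Ico_subset_Ico hii' hjj') _

theorem col_eq_or_row_eq (hf : IsMaxRecOn p q f) {a b : ℕ} (hpa : p ≤ a) (hab : a < b)
    (hbq : b < q) :
    (∀ l, p ≤ l → l ≤ a → f l (b + 1) = f l b) ∨ (∀ l, b < l → l ≤ q → f a l = f (a + 1) l) := by
  rcases le_or_gt (f b (b + 1)) (f a b) with h | h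
  · refine Or.inl fun l hpl hla => ?_
    rw [hf.eq_max hpl (hla.trans_lt hab) (Nat.lt_succ_self b) hbq]
    exact max_eq_left (h.trans (hf.le_of_subinterval hpl hla hab le_rfl hbq.le))
  · refine Or.inr fun l hbl hlq => ?_
    have hal : f a l = f b l := by
      rw [hf.eq_max hpa hab hbl hlq]
      exact max_eq_right (h.trans_le (hf.le_of_subinterval (by omega) le_rfl (by omega) hbl hlq)).le
    refine le_antisymm ?_ (hf.le_of_subinterval hpa (Nat.le_succ a) (by omega) le_rfl hlq)
    exact hal ▸ hf.le_of_subinterval (by omega) hab hbl le_rfl hlq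

end IsMaxRecOn

def inMin (n : ℕ) (δ : ℕ → ℕ → ℝ) (i j : ℕ) : ℝ :=
  if i < n then min (δ i j - δ (i + 1) j) (δ i j - δ i (j + 1)) else δ i j - δ i (j + 1)

theorem tropCond_iff {n : ℕ} {δ : ℕ → ℕ → ℝ} {i j : ℕ} :
    tropCond n δ i j ↔ inMin n δ i j = piFn δ i j :=
  Iff.rfl

section Psi

variable {n : ℕ} {f : ℕ → ℕ → ℝ}

def colGap (f : ℕ → ℕ → ℝ) (a b : ℕ) : ℝ :=
  ∑ l ∈ Icc 1 a, (f l (b + 1) - f l b)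

def rowGap (n : ℕ) (f : ℕ → ℕ → ℝ) (a b : ℕ) : ℝ :=
  ∑ l ∈ Icc (b + 1) n, (f a l - f (a + 1) l)

theorem colGap_zero (f : ℕ → ℕ → ℝ) (b : ℕ) : colGap f 0 b = 0 := by
  simp [colGap]

theorem rowGap_of_le (n : ℕ) (f : ℕ → ℕ → ℝ) (a : ℕ) {b : ℕ} (hnb : n ≤ b) :
    rowGap n f a b = 0 := by
  simp [rowGap, Icc_eq_empty_of_lt (Nat.lt_succ_of_le hnb)]

theorem colGap_eq_colGap_pred_add (f : ℕ → ℕ → ℝ) {a : ℕ} (b : ℕ) (ha : 1 ≤ a) :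
    colGap f a b = colGap f (a - 1) b + (f a (b + 1) - f a b) := by
  obtain ⟨a, rfl⟩ := Nat.exists_eq_add_of_le' ha
  exact sum_Icc_succ_top (by omega) _

theorem rowGap_eq_add_rowGap_succ (f : ℕ → ℕ → ℝ) (a : ℕ) {b : ℕ} (hbn : b < n) :
    rowGap n f a b = (f a (b + 1) - f (a + 1) (b + 1)) + rowGap n f a (b + 1) :=
  sum_Icc_eq_add_sum_Icc _ hbn

theorem IsMaxRecOn.min_colGap_rowGap (hf : IsMaxRecOn 1 n f) {a b : ℕ} (ha : 1 ≤ a) (hab : a < b)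
    (hbn : b < n) : min (colGap f a b) (rowGap n f a b) = 0 := by
  have hcol : 0 ≤ colGap f a b := sum_nonneg fun l hl => by
    simp only [mem_Icc] at hl
    exact sub_nonneg.2 (hf.le_of_subinterval hl.1 le_rfl (by omega) (Nat.le_succ b) hbn)
  have hrow : 0 ≤ rowGap n f a b := sum_nonneg fun l hl => by
    simp only [mem_Icc] at hl
    exact sub_nonneg.2 (hf.le_of_subinterval ha (Nat.le_succ a) (by omega) le_rfl hl.2)
  rcases hf.col_eq_or_row_eq ha hab hbn with h | h
  · have : colGap f a b = 0 := sum_eq_zero fun l hl => by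
      simp only [mem_Icc] at hl
      rw [h l hl.1 hl.2, sub_self]
    rw [this, min_eq_left hrow]
  · have : rowGap n f a b = 0 := sum_eq_zero fun l hl => by
      simp only [mem_Icc] at hl
      rw [h l (by omega) hl.2, sub_self]
    rw [this, min_eq_right hcol]

variable (ell : ℝ)

theorem PsiMap_sub_PsiMap_succ_left (f : ℕ → ℕ → ℝ) {a b : ℕ} (hb : 1 ≤ b) (ha : a < n) :
    PsiMap n ell f a b - PsiMap n ell f (a + 1) b = f b a + colGap f b a := by
  rw [colGap_eq_colGap_pred_add f a hb]
  unfold PsiMap colGap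
  rw [sum_Icc_eq_add_sum_Icc (fun l => f b l) ha, sum_sub_distrib]
  ring

theorem PsiMap_sub_PsiMap_succ_right (f : ℕ → ℕ → ℝ) (a : ℕ) {b : ℕ} (hb : 1 ≤ b) :
    PsiMap n ell f a b - PsiMap n ell f a (b + 1) = f b a + rowGap n f b a := by
  obtain ⟨b, rfl⟩ := Nat.exists_eq_add_of_le' hb
  simp only [PsiMap, rowGap, Nat.add_sub_cancel, sum_Icc_succ_top (Nat.le_add_left 1 b),
    sum_sub_distrib]
  ring

theorem inMin_PsiMap (hf : IsMaxRecOn 1 n f) {i j : ℕ} (hj : 1 ≤ j) (hji : j < i) :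
    inMin n (PsiMap n ell f) i j = f j i := by
  unfold inMin
  rw [PsiMap_sub_PsiMap_succ_right ell f i hj]
  split_ifs with h
  · rw [PsiMap_sub_PsiMap_succ_left ell f hj h, min_add_add_left,
      hf.min_colGap_rowGap hj hji h, add_zero]
  · rw [rowGap_of_le n f j (by omega), add_zero]

theorem piFn_PsiMap (hf : IsMaxRecOn 1 n f) {i j : ℕ} (hj : 1 ≤ j) (hji : j < i) (hin : i ≤ n) :
    piFn (PsiMap n ell f) i j = f j i := by
  have hv : PsiMap n ell f (i - 1) j - PsiMap n ell f i j = f j i + colGap f (j - 1) (i - 1) := by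
    have := PsiMap_sub_PsiMap_succ_left ell f hj (show i - 1 < n by omega)
    rw [Nat.sub_add_cancel (by omega : 1 ≤ i), colGap_eq_colGap_pred_add f _ hj,
      Nat.sub_add_cancel (by omega : 1 ≤ i)] at this
    linarith
  unfold piFn
  split_ifs with h
  · have hh : PsiMap n ell f i (j - 1) - PsiMap n ell f i j
        = f j i + rowGap n f (j - 1) (i - 1) := by
      have := PsiMap_sub_PsiMap_succ_right (n := n) ell f i (show 1 ≤ j - 1 by omega)
      rw [Nat.sub_add_cancel hj] at this
      rw [rowGap_eq_add_rowGap_succ f _ (by omega), Nat.sub_add_cancel (by omega : 1 ≤ i),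
        Nat.sub_add_cancel hj]
      linarith
    rw [hv, hh, min_add_add_left, hf.min_colGap_rowGap (by omega) (by omega) (by omega), add_zero]
  · rw [hv, show j - 1 = 0 by omega, colGap_zero, add_zero]

end Psi

theorem SPred_PsiMap {n : ℕ} {lam : ℕ → ℝ} {ell : ℝ} {f : ℕ → ℕ → ℝ}
    (hf : FPred n lam ell f) : SPred n lam (PsiMap n ell f) :=
  ⟨hf.2.2, fun _ _ hj hji hin =>
    (inMin_PsiMap ell hf.2.1 hj hji).trans (piFn_PsiMap ell hf.2.1 hj hji hin).symm⟩

theorem PhiMap_PsiMap {n : ℕ} {ell : ℝ} {f : ℕ → ℕ → ℝ} (hf : IsMaxRecOn 1 n f) {i j : ℕ}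
    (hi : 1 ≤ i) (hij : i < j) (hjn : j ≤ n) : PhiMap (PsiMap n ell f) i j = f i j :=
  piFn_PsiMap ell hf hi hij hjn

section Comparison

variable {n : ℕ} {δ δ' : ℕ → ℕ → ℝ} {i j : ℕ}

theorem inMin_le_inMin
    (hv : i < n → δ (i + 1) j - δ' (i + 1) j ≤ δ i j - δ' i j)
    (hh : δ i (j + 1) - δ' i (j + 1) ≤ δ i j - δ' i j) : inMin n δ' i j ≤ inMin n δ i j := by
  unfold inMin
  split_ifs with h
  · exact min_le_min (by linarith [hv h]) (by linarith)
  · linarith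

theorem piFn_lt_piFn (hv : δ (i - 1) j - δ' (i - 1) j < δ i j - δ' i j)
    (hh : 2 ≤ j → δ i (j - 1) - δ' i (j - 1) < δ i j - δ' i j) : piFn δ i j < piFn δ' i j := by
  unfold piFn
  split_ifs with h
  · exact min_lt_min (by linarith) (by linarith [hh h])
  · linarith

end Comparison

theorem Finset.exists_max_image_of_rank {α β γ : Type*} [LinearOrder β] [LinearOrder γ]
    {s : Finset α} (hs : s.Nonempty) (ε : α → β) (rank : α → γ) :
    ∃ w ∈ s, (∀ v ∈ s, ε v ≤ ε w) ∧ ∀ v ∈ s, rank v < rank w → ε v < ε w := by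
  classical
  obtain ⟨w₀, hw₀, hmax⟩ := s.exists_max_image ε hs
  obtain ⟨w, hw, hmin⟩ :=
    (s.filter (ε · = ε w₀)).exists_min_image rank ⟨w₀, mem_filter.2 ⟨hw₀, rfl⟩⟩
  obtain ⟨hws, hwε⟩ := mem_filter.1 hw
  refine ⟨w, hws, fun v hv => hwε ▸ hmax v hv, fun v hv hvw => ?_⟩
  refine lt_of_le_of_ne (hwε ▸ hmax v hv) fun hvε => ?_
  exact (hmin v (mem_filter.2 ⟨hv, hvε.trans hwε⟩)).not_gt hvw

def quiverVertices (n : ℕ) : Finset (ℕ × ℕ) :=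
  (Icc 1 n ×ˢ Icc 1 n).filter fun v => v.2 ≤ v.1

theorem mem_quiverVertices {n : ℕ} {v : ℕ × ℕ} :
    v ∈ quiverVertices n ↔ 1 ≤ v.2 ∧ v.2 ≤ v.1 ∧ v.1 ≤ n := by
  simp only [quiverVertices, mem_filter, mem_product, mem_Icc]
  omega

theorem le_of_tropCond {n : ℕ} {δ δ' : ℕ → ℕ → ℝ}
    (hδ : ∀ i j, 1 ≤ j → j < i → i ≤ n → tropCond n δ i j)
    (hδ' : ∀ i j, 1 ≤ j → j < i → i ≤ n → tropCond n δ' i j)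
    (hstar : ∀ k, 1 ≤ k → k ≤ n → δ k k ≤ δ' k k) :
    ∀ a b, 1 ≤ b → b ≤ a → a ≤ n → δ a b ≤ δ' a b := by
  intro a b hb hba han
  have hab : (a, b) ∈ quiverVertices n := mem_quiverVertices.2 ⟨hb, hba, han⟩
  obtain ⟨⟨i, j⟩, hw, hmax, hlt⟩ := Finset.exists_max_image_of_rank ⟨_, hab⟩
    (fun v => δ v.1 v.2 - δ' v.1 v.2) (fun v => v.1 + v.2)
  simp only [mem_quiverVertices] at hw hmax hlt
  obtain ⟨hj, hji, hin⟩ := hw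
  by_contra! hba'
  have hc : 0 < δ i j - δ' i j := (sub_pos.2 hba').trans_le (hmax (a, b) ⟨hb, hba, han⟩)
  have hji : j < i := hji.lt_of_ne fun h => by
    subst h
    linarith [hstar j hj hin]
  have hin' := inMin_le_inMin (n := n) (fun h => hmax (i + 1, j) ⟨hj, by omega, h⟩)
    (hmax (i, j + 1) ⟨by omega, hji, hin⟩)
  have hout := piFn_lt_piFn (hlt (i - 1, j) ⟨hj, by omega, by omega⟩ (by simp only; omega))
    fun h => hlt (i, j - 1) ⟨by omega, by omega, hin⟩ (by simp only; omega)
  linarith [tropCond_iff.1 (hδ i j hj hji hin), tropCond_iff.1 (hδ' i j hj hji hin)]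

theorem SPred.eq {n : ℕ} {lam : ℕ → ℝ} {δ δ' : ℕ → ℕ → ℝ} (hδ : SPred n lam δ)
    (hδ' : SPred n lam δ') : ∀ a b, 1 ≤ b → b ≤ a → a ≤ n → δ a b = δ' a b := fun a b hb hba han =>
  le_antisymm
    (le_of_tropCond hδ.2 hδ'.2 (fun k hk hkn => ((hδ.1 k hk hkn).trans (hδ'.1 k hk hkn).symm).le)
      a b hb hba han)
    (le_of_tropCond hδ'.2 hδ.2 (fun k hk hkn => ((hδ'.1 k hk hkn).trans (hδ.1 k hk hkn).symm).le)
      a b hb hba han)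

section Existence

variable {lam : ℕ → ℝ} {p q m k : ℕ}

def mean (lam : ℕ → ℝ) (p q : ℕ) : ℝ :=
  (∑ l ∈ Icc p q, lam l) / ((q : ℝ) - p + 1)

/-- The value given to the block of entries crossing `k` when an ideal filling on `[p, q]` is
built by splitting at `k`. -/
def splitSlope (lam : ℕ → ℝ) (p q k : ℕ) : ℝ :=
  (mean lam p k - mean lam p q) / ((q : ℝ) - k)

theorem mean_self (lam : ℕ → ℝ) (p : ℕ) : mean lam p p = lam p := by
  simp [mean]

theorem mul_mean (lam : ℕ → ℝ) (hpq : p ≤ q) :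
    ((q : ℝ) - p + 1) * mean lam p q = ∑ l ∈ Icc p q, lam l := by
  have : (p : ℝ) ≤ q := by exact_mod_cast hpq
  rw [mean, mul_div_cancel₀ _ (by linarith)]

theorem mul_mean_eq_add (lam : ℕ → ℝ) (hpm : p ≤ m) (hmq : m < q) :
    ((q : ℝ) - p + 1) * mean lam p q
      = ((m : ℝ) - p + 1) * mean lam p m + ((q : ℝ) - m) * mean lam (m + 1) q := by
  rw [mul_mean lam (hpm.trans hmq.le), mul_mean lam hpm,
    sum_Icc_eq_sum_Icc_add_sum_Icc lam (by omega) hmq.le, ← mul_mean lam hmq]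
  push_cast
  ring

theorem mean_le_of_forall_le {c : ℝ} (hpq : p ≤ q) (h : ∀ l, p ≤ l → l ≤ q → lam l ≤ c) :
    mean lam p q ≤ c := by
  have hpos : (0 : ℝ) < (q : ℝ) - p + 1 := by
    have : (p : ℝ) ≤ q := by exact_mod_cast hpq
    linarith
  rw [mean, div_le_iff₀ hpos, mul_comm, ← sum_Icc_const c (by omega)]
  exact sum_le_sum fun l hl => h l (mem_Icc.1 hl).1 (mem_Icc.1 hl).2

theorem le_mean_of_forall_le {c : ℝ} (hpq : p ≤ q) (h : ∀ l, p ≤ l → l ≤ q → c ≤ lam l) :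
    c ≤ mean lam p q := by
  have hpos : (0 : ℝ) < (q : ℝ) - p + 1 := by
    have : (p : ℝ) ≤ q := by exact_mod_cast hpq
    linarith
  rw [mean, le_div_iff₀ hpos, mul_comm, ← sum_Icc_const c (by omega)]
  exact sum_le_sum fun l hl => h l (mem_Icc.1 hl).1 (mem_Icc.1 hl).2

theorem mean_le_mean_of_antitoneOn (hlam : AntitoneOn lam (Set.Icc p q)) (hpm : p ≤ m)
    (hmq : m < q) : mean lam p q ≤ mean lam p m := by
  have hlo : lam m ≤ mean lam p m := le_mean_of_forall_le hpm fun l hpl hlm =>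
    hlam ⟨hpl, by omega⟩ ⟨hpm, hmq.le⟩ hlm
  have hhi : mean lam (m + 1) q ≤ lam m := mean_le_of_forall_le hmq fun l hl hlq =>
    hlam ⟨hpm, hmq.le⟩ ⟨by omega, hlq⟩ (by omega)
  have hqm : (0 : ℝ) < (q : ℝ) - m := sub_pos.2 (by exact_mod_cast hmq)
  have hmp : (0 : ℝ) ≤ (m : ℝ) - p := sub_nonneg.2 (by exact_mod_cast hpm)
  have := mul_mean_eq_add lam hpm hmq
  nlinarith

theorem splitSlope_nonneg (hlam : AntitoneOn lam (Set.Icc p q)) (hpm : p ≤ m) (hmq : m < q) :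
    0 ≤ splitSlope lam p q m :=
  div_nonneg (sub_nonneg.2 (mean_le_mean_of_antitoneOn hlam hpm hmq))
    (sub_nonneg.2 (by exact_mod_cast hmq.le))

theorem sub_mean_le_of_splitSlope_le {A : ℝ} (hkq : k < q) (h : splitSlope lam p q k ≤ A) :
    mean lam p k - mean lam p q ≤ A * ((q : ℝ) - k) :=
  (div_le_iff₀ (sub_pos.2 (by exact_mod_cast hkq))).1 h

theorem mean_eq_add_splitSlope (hmq : m < q) :
    mean lam p m = mean lam p q + ((q : ℝ) - m) * splitSlope lam p q m := by
  have : (q : ℝ) - m ≠ 0 := (sub_pos.2 (by exact_mod_cast hmq)).ne'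
  rw [splitSlope, mul_div_cancel₀ _ this]
  ring

theorem mean_succ_eq_sub_splitSlope (hpm : p ≤ m) (hmq : m < q) :
    mean lam (m + 1) q = mean lam p q - ((m : ℝ) - p + 1) * splitSlope lam p q m := by
  have hqm : (q : ℝ) - m ≠ 0 := (sub_pos.2 (by exact_mod_cast hmq)).ne'
  have := mul_mean_eq_add lam hpm hmq
  rw [mean_eq_add_splitSlope (p := p) hmq] at this
  apply mul_left_cancel₀ hqm
  linear_combination -this

theorem splitSlope_left_le (hkm : k < m) (hmq : m < q)
    (hk : splitSlope lam p q k ≤ splitSlope lam p q m) :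
    splitSlope lam p m k ≤ splitSlope lam p q m := by
  have h := sub_mean_le_of_splitSlope_le (hkm.trans hmq) hk
  rw [splitSlope, div_le_iff₀ (sub_pos.2 (by exact_mod_cast hkm)),
    mean_eq_add_splitSlope (p := p) hmq]
  linarith

theorem splitSlope_right_le (hpm : p ≤ m) (hmk : m < k) (hkq : k < q)
    (hk : splitSlope lam p q k ≤ splitSlope lam p q m) :
    splitSlope lam (m + 1) q k ≤ splitSlope lam p q m := by
  have hmq := hmk.trans hkq
  have h := sub_mean_le_of_splitSlope_le hkq hk
  have hk' := mul_mean_eq_add lam hpm hmk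
  have hkp : (0 : ℝ) ≤ (k : ℝ) - p + 1 := by
    have : (p : ℝ) ≤ k := by exact_mod_cast (hpm.trans hmk.le)
    linarith
  have hkm : (0 : ℝ) < (k : ℝ) - m := sub_pos.2 (by exact_mod_cast hmk)
  rw [splitSlope, div_le_iff₀ (sub_pos.2 (by exact_mod_cast hkq)), ← mul_le_mul_iff_of_pos_left hkm,
    mean_succ_eq_sub_splitSlope hpm hmq]
  rw [mean_eq_add_splitSlope (p := p) hmq] at hk'
  nlinarith [mul_le_mul_of_nonneg_left h hkp]

def HasRowSums (lam : ℕ → ℝ) (M : ℝ) (p q : ℕ) (f : ℕ → ℕ → ℝ) : Prop :=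
  ∀ k, p ≤ k → k ≤ q →
    (∑ j ∈ Icc (k + 1) q, f k j) - (∑ i ∈ Icc p (k - 1), f i k) + M = lam k

def IsIdealFillingOn (lam : ℕ → ℝ) (M : ℝ) (p q : ℕ) (f : ℕ → ℕ → ℝ) : Prop :=
  (∀ i j, p ≤ i → i < j → j ≤ q → 0 ≤ f i j) ∧ IsMaxRecOn p q f ∧ HasRowSums lam M p q f

theorem FPred_iff {n : ℕ} {ell : ℝ} {f : ℕ → ℕ → ℝ} :
    FPred n lam ell f ↔ IsIdealFillingOn lam ell 1 n f :=
  Iff.rfl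

def glueFilling (m : ℕ) (A : ℝ) (f₁ f₂ : ℕ → ℕ → ℝ) : ℕ → ℕ → ℝ :=
  fun i j => if j ≤ m then f₁ i j else if m < i then f₂ i j else A

variable {A : ℝ} {f₁ f₂ : ℕ → ℕ → ℝ} {i j : ℕ}

theorem glueFilling_of_le (hjm : j ≤ m) : glueFilling m A f₁ f₂ i j = f₁ i j :=
  if_pos hjm

theorem glueFilling_of_lt (hmi : m < i) (hmj : m < j) : glueFilling m A f₁ f₂ i j = f₂ i j := by
  simp [glueFilling, hmi, hmj]

theorem glueFilling_of_le_of_lt (him : i ≤ m) (hmj : m < j) : glueFilling m A f₁ f₂ i j = A := by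
  simp [glueFilling, not_lt.2 him, hmj]

theorem glueFilling_mem (S : Set ℝ) (h₁ : ∀ i j, p ≤ i → i < j → j ≤ m → f₁ i j ∈ S)
    (h₂ : ∀ i j, m + 1 ≤ i → i < j → j ≤ q → f₂ i j ∈ S) (hA : A ∈ S) :
    ∀ i j, p ≤ i → i < j → j ≤ q → glueFilling m A f₁ f₂ i j ∈ S := by
  intro i j hpi hij hjq
  rcases le_or_gt j m with hjm | hmj
  · exact glueFilling_of_le hjm ▸ h₁ i j hpi hij hjm
  rcases le_or_gt i m with him | hmi
  · exact glueFilling_of_le_of_lt him hmj ▸ hA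
  · exact glueFilling_of_lt hmi hmj ▸ h₂ i j hmi hij hjq

theorem IsMaxRecOn.glue (h₁ : IsMaxRecOn p m f₁) (h₂ : IsMaxRecOn (m + 1) q f₂)
    (hf₁ : ∀ i j, p ≤ i → i < j → j ≤ m → f₁ i j ≤ A)
    (hf₂ : ∀ i j, m + 1 ≤ i → i < j → j ≤ q → f₂ i j ≤ A) :
    IsMaxRecOn p q (glueFilling m A f₁ f₂) := by
  intro i j hpi hij hjq h2
  rcases le_or_gt j m with hjm | hmj
  · rw [glueFilling_of_le hjm, glueFilling_of_le hjm, glueFilling_of_le (by omega)]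
    exact h₁ i j hpi hij hjm h2
  rcases le_or_gt i m with him | hmi
  · have hle := glueFilling_mem (Set.Iic A) hf₁ hf₂ (Set.mem_Iic.2 le_rfl)
    rw [glueFilling_of_le_of_lt him hmj]
    rcases (by omega : i + 1 ≤ m ∨ m < j - 1) with h | h
    · rw [glueFilling_of_le_of_lt h hmj, max_eq_left (hle i (j - 1) hpi (by omega) (by omega))]
    · rw [glueFilling_of_le_of_lt him h, max_eq_right (hle (i + 1) j (by omega) (by omega) hjq)]
  · rw [glueFilling_of_lt hmi hmj, glueFilling_of_lt (by omega) hmj,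
      glueFilling_of_lt hmi (by omega)]
    exact h₂ i j hmi hij hjq h2

theorem HasRowSums.glue {M M₁ M₂ : ℝ} (h₁ : HasRowSums lam M₁ p m f₁)
    (h₂ : HasRowSums lam M₂ (m + 1) q f₂) (hM₁ : M₁ = M + ((q : ℝ) - m) * A)
    (hM₂ : M₂ = M - ((m : ℝ) - p + 1) * A) (hpm : p ≤ m) (hmq : m < q) :
    HasRowSums lam M p q (glueFilling m A f₁ f₂) := by
  intro k hpk hkq
  rcases le_or_gt k m with hkm | hmk
  · have hrow : ∑ j ∈ Icc (k + 1) q, glueFilling m A f₁ f₂ k j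
        = ∑ j ∈ Icc (k + 1) m, f₁ k j + ((q : ℝ) - m) * A := by
      rw [sum_Icc_eq_sum_Icc_add_sum_Icc _ (by omega) hmq.le,
        sum_congr rfl fun j hj => glueFilling_of_le (mem_Icc.1 hj).2,
        sum_congr rfl fun j hj => glueFilling_of_le_of_lt hkm (mem_Icc.1 hj).1,
        sum_Icc_const A (by omega)]
      push_cast
      ring
    have hcol : ∑ i ∈ Icc p (k - 1), glueFilling m A f₁ f₂ i k = ∑ i ∈ Icc p (k - 1), f₁ i k :=
      sum_congr rfl fun _ _ => glueFilling_of_le hkm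
    rw [hrow, hcol]
    linarith [h₁ k hpk hkm]
  · have hrow : ∑ j ∈ Icc (k + 1) q, glueFilling m A f₁ f₂ k j = ∑ j ∈ Icc (k + 1) q, f₂ k j :=
      sum_congr rfl fun j hj => glueFilling_of_lt hmk (by simp only [mem_Icc] at hj; omega)
    have hcol : ∑ i ∈ Icc p (k - 1), glueFilling m A f₁ f₂ i k
        = ((m : ℝ) - p + 1) * A + ∑ i ∈ Icc (m + 1) (k - 1), f₂ i k := by
      rw [sum_Icc_eq_sum_Icc_add_sum_Icc (b := m) _ (by omega) (by omega),
        sum_congr rfl fun i hi => glueFilling_of_le_of_lt (mem_Icc.1 hi).2 hmk,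
        sum_congr rfl fun i hi => glueFilling_of_lt (by simp only [mem_Icc] at hi; omega) hmk,
        sum_Icc_const A (by omega)]
    rw [hrow, hcol]
    linarith [h₂ k hmk hkq]

/-- The bound by the split slopes is carried along so that the two halves can be glued: both
must stay below the value of the crossing block. -/
theorem exists_isIdealFillingOn (hpq : p ≤ q) (hlam : AntitoneOn lam (Set.Icc p q)) :
    ∃ f, IsIdealFillingOn lam (mean lam p q) p q f ∧
      ∀ K, (∀ k, p ≤ k → k < q → splitSlope lam p q k ≤ K) →
        ∀ i j, p ≤ i → i < j → j ≤ q → f i j ≤ K := by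
  induction hd : q - p using Nat.strong_induction_on generalizing p q with
  | _ d ih =>
  rcases hpq.eq_or_lt with rfl | hpq
  · refine ⟨fun _ _ => 0, ⟨fun _ _ _ _ _ => le_rfl, fun _ _ _ _ _ _ => by omega, ?_⟩,
      fun _ _ _ _ _ _ _ => by omega⟩
    intro k hpk hkp
    obtain rfl : k = p := le_antisymm hkp hpk
    simp [mean_self]
  obtain ⟨m, hm, hmax⟩ := (Ico p q).exists_max_image (splitSlope lam p q) ⟨p, by simpa⟩
  obtain ⟨hpm, hmq⟩ := mem_Ico.1 hm
  obtain ⟨f₁, hf₁, hf₁bound⟩ := ih (m - p) (by omega) hpm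
    (hlam.mono (Set.Icc_subset_Icc le_rfl hmq.le)) rfl
  obtain ⟨f₂, hf₂, hf₂bound⟩ := ih (q - (m + 1)) (by omega) hmq
    (hlam.mono (Set.Icc_subset_Icc (by omega) le_rfl)) rfl
  have hf₁A := hf₁bound _ fun k hpk hkm =>
    splitSlope_left_le hkm hmq (hmax k (mem_Ico.2 ⟨hpk, hkm.trans hmq⟩))
  have hf₂A := hf₂bound _ fun k hmk hkq =>
    splitSlope_right_le hpm hmk hkq (hmax k (mem_Ico.2 ⟨by omega, hkq⟩))
  refine ⟨glueFilling m (splitSlope lam p q m) f₁ f₂,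
    ⟨glueFilling_mem (Set.Ici 0) hf₁.1 hf₂.1 (splitSlope_nonneg hlam hpm hmq),
      hf₁.2.1.glue hf₂.2.1 hf₁A hf₂A,
      hf₁.2.2.glue hf₂.2.2 (mean_eq_add_splitSlope hmq) (mean_succ_eq_sub_splitSlope hpm hmq)
        hpm hmq⟩, fun K hK => ?_⟩
  have hAK := hK m hpm hmq
  exact glueFilling_mem (Set.Iic K) (fun i j hpi hij hjm => (hf₁A i j hpi hij hjm).trans hAK)
    (fun i j hmi hij hjq => (hf₂A i j hmi hij hjq).trans hAK) hAK

end Existence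

theorem exists_FPred {n : ℕ} {lam : ℕ → ℝ} {ell : ℝ} (hn : 1 ≤ n)
    (hdom : ∀ i, 1 ≤ i → i + 1 ≤ n → lam (i + 1) ≤ lam i)
    (hell : ell = (∑ i ∈ Icc 1 n, lam i) / n) : ∃ f, FPred n lam ell f := by
  have hmean : mean lam 1 n = ell := by simp [mean, hell]
  obtain ⟨f, hf, -⟩ := exists_isIdealFillingOn hn (antitoneOn_Icc_of_succ_le hdom)
  exact ⟨f, FPred_iff.2 (hmean ▸ hf)⟩

section Congr

variable {n : ℕ} {lam : ℕ → ℝ} {ell : ℝ}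

theorem PhiMap_congr {δ δ' : ℕ → ℕ → ℝ} (h : ∀ a b, 1 ≤ b → b ≤ a → a ≤ n → δ a b = δ' a b)
    {i j : ℕ} (hi : 1 ≤ i) (hij : i < j) (hjn : j ≤ n) : PhiMap δ i j = PhiMap δ' i j := by
  unfold PhiMap piFn
  rw [h (j - 1) i hi (by omega) (by omega), h j i hi hij.le hjn]
  split_ifs
  · rw [h j (i - 1) (by omega) (by omega) hjn]
  · rfl

theorem PsiMap_congr {f g : ℕ → ℕ → ℝ} (h : ∀ i j, 1 ≤ i → i < j → j ≤ n → f i j = g i j)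
    {a b : ℕ} (hb : 1 ≤ b) (hba : b ≤ a) (han : a ≤ n) :
    PsiMap n ell f a b = PsiMap n ell g a b := by
  unfold PsiMap
  rw [sum_congr rfl fun l hl => h b l hb (by simp only [mem_Icc] at hl; omega) (mem_Icc.1 hl).2,
    sum_congr rfl fun l hl => h l a (mem_Icc.1 hl).1 (by simp only [mem_Icc] at hl; omega) han]

theorem FPred_congr {f g : ℕ → ℕ → ℝ} (h : ∀ i j, 1 ≤ i → i < j → j ≤ n → f i j = g i j)
    (hf : FPred n lam ell f) : FPred n lam ell g := by
  refine ⟨fun i j hi hij hjn => h i j hi hij hjn ▸ hf.1 i j hi hij hjn,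
    fun i j hi hij hjn h2 => ?_,
    fun k hk hkn => (PsiMap_congr h hk le_rfl hkn).symm.trans (hf.2.2 k hk hkn)⟩
  rw [← h i j hi hij hjn, ← h (i + 1) j (by omega) (by omega) hjn,
    ← h i (j - 1) hi (by omega) (by omega)]
  exact hf.2.1 i j hi hij hjn h2

end Congr

theorem stmt12 (n : ℕ) (hn : 2 ≤ n) (lam : ℕ → ℝ)
    (hdom : ∀ i, 1 ≤ i → i + 1 ≤ n → lam (i + 1) ≤ lam i)
    (ell : ℝ) (hell : ell = (∑ i ∈ Finset.Icc 1 n, lam i) / n) :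
    -- Φ is well defined
    (∀ δ, SPred n lam δ → FPred n lam ell (PhiMap δ)) ∧
    -- Ψ is well defined
    (∀ f, FPred n lam ell f → SPred n lam (PsiMap n ell f)) ∧
    -- Ψ ∘ Φ = id (on the quiver vertices)
    (∀ δ, SPred n lam δ →
      ∀ i j, 1 ≤ j → j ≤ i → i ≤ n → PsiMap n ell (PhiMap δ) i j = δ i j) ∧
    -- Φ ∘ Ψ = id (on the index pairs of fillings)
    (∀ f, FPred n lam ell f →
      ∀ i j, 1 ≤ i → i < j → j ≤ n → PhiMap (PsiMap n ell f) i j = f i j) ∧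
    -- in particular the ideal filling for λ exists and is unique
    (∃ f, FPred n lam ell f ∧ ∀ g, FPred n lam ell g →
      ∀ i j, 1 ≤ i → i < j → j ≤ n → g i j = f i j) := by
  obtain ⟨f₀, hf₀⟩ := exists_FPred (by omega) hdom hell
  have hS₀ := SPred_PsiMap hf₀
  have hΦ : ∀ δ, SPred n lam δ → ∀ i j, 1 ≤ i → i < j → j ≤ n → PhiMap δ i j = f₀ i j :=
    fun δ hδ i j hi hij hjn => (PhiMap_congr (hδ.eq hS₀) hi hij hjn).trans
      (PhiMap_PsiMap hf₀.2.1 hi hij hjn)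
  refine ⟨fun δ hδ => FPred_congr (fun i j hi hij hjn => (hΦ δ hδ i j hi hij hjn).symm) hf₀,
    fun f hf => SPred_PsiMap hf, fun δ hδ i j hj hji hin => ?_,
    fun f hf i j => PhiMap_PsiMap hf.2.1, f₀, hf₀, fun g hg i j hi hij hjn => ?_⟩
  · rw [PsiMap_congr (hΦ δ hδ) hj hji hin]
    exact (hδ.eq hS₀ i j hj hji hin).symm
  · rw [← PhiMap_PsiMap (ell := ell) hg.2.1 hi hij hjn]
    exact hΦ _ (SPred_PsiMap hg) i j hi hij hjn
end
end
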